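/- arXiv:2603.04255 — 9 statements merged into one kernel-verified Lean document; each statement's English description precedes it below -/
import Mathlib

section
/- Let n ≥ 2 and let A ∈ 𝔽^{n×n} have all off-diagonal entries nonzero. Let X₁, X₂ ⊆ [n] be such that X₁ ∩ X₂ ≠ ∅ and X̄₁ ∩ X̄₂ ≠ ∅, and suppose rank(A[X₁, X̄₁]) = 1 and rank(A[X₂, X̄₂]) = 1. Then rank(A[X₁ ∩ X₂, X̄₁ ∪ X̄₂]) = 1 and rank(A[X₁ ∪ X₂, X̄₁ ∩ X̄₂]) = 1. -/
namespace PMAP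

open Matrix

variable {K : Type*}

/-- The submatrix of a square matrix `A` with rows indexed by `S` and columns indexed by `T`. -/
def subm {m : Type*} (A : Matrix m m K) (S T : Finset m) : Matrix S T K :=
  Matrix.of fun i j => A i.1 j.1

/-- The principal minor of `A` indexed by `S`. -/
noncomputable def pminor {m : Type*} [DecidableEq m] [CommRing K]
    (A : Matrix m m K) (S : Finset m) : K :=
  (subm A S S).det

/-- `A` and `B` are principal minor equivalent. -/
def PME {m : Type*} [DecidableEq m] [CommRing K] (A B : Matrix m m K) : Prop :=
  ∀ S : Finset m, S.Nonempty → pminor A S = pminor B S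

/-- `A` and `B` are principal minor equivalent up to order `k`. -/
def PMEupto {m : Type*} [DecidableEq m] [CommRing K] (k : ℕ) (A B : Matrix m m K) : Prop :=
  ∀ S : Finset m, S.Nonempty → S.card ≤ k → pminor A S = pminor B S

/-- `X` is a cut of the principal submatrix `A[I]`. -/
def IsCutOn {m : Type*} [DecidableEq m] [Field K] (A : Matrix m m K) (I X : Finset m) : Prop :=
  X ⊆ I ∧ 2 ≤ X.card ∧ X.card + 2 ≤ I.card ∧
    (subm A X (I \ X)).rank ≤ 1 ∧ (subm A (I \ X) X).rank ≤ 1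

/-- `X` is a cut of `A`. -/
def IsCut {m : Type*} [Fintype m] [DecidableEq m] [Field K] (A : Matrix m m K)
    (X : Finset m) : Prop :=
  IsCutOn A Finset.univ X

/-- Property `R`: all off-diagonal entries are nonzero, and every rank-one `2×2`
submatrix `A[{i,j},{k,ℓ}]` (with `i,j,k,ℓ` distinct) extends to a rank-one submatrix
`A[X, Xᶜ]` with `i,j ∈ X` and `k,ℓ ∈ Xᶜ`. -/
def PropR {m : Type*} [Fintype m] [DecidableEq m] [Field K] (A : Matrix m m K) : Prop :=
  (∀ i j : m, i ≠ j → A i j ≠ 0) ∧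
    ∀ i j k l : m, i ≠ j → i ≠ k → i ≠ l → j ≠ k → j ≠ l → k ≠ l →
      (subm A {i, j} {k, l}).rank = 1 →
      ∃ X : Finset m, i ∈ X ∧ j ∈ X ∧ k ∉ X ∧ l ∉ X ∧ (subm A X Xᶜ).rank = 1

/-- `A` is diagonally similar to `B`: `B = D⁻¹ A D` for an invertible diagonal matrix `D`. -/
def DiagSim {m : Type*} [Field K] (A B : Matrix m m K) : Prop :=
  ∃ D : m → K, (∀ i, D i ≠ 0) ∧ ∀ i j, B i j = (D i)⁻¹ * A i j * D j

/-- The set `D₁(A,B)` of indices `i` with `A[[n]∖{i}]` diagonally similar to `B[[n]∖{i}]`. -/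
def D1 {n : ℕ} [Field K] (A B : Matrix (Fin n) (Fin n) K) : Set (Fin n) :=
  {i | DiagSim (subm A {i}ᶜ {i}ᶜ) (subm B {i}ᶜ {i}ᶜ)}

/-- The set `D₂(A,B)` of indices `i` with `A[[n]∖{i}]` diagonally similar to `B[[n]∖{i}]ᵀ`. -/
def D2 {n : ℕ} [Field K] (A B : Matrix (Fin n) (Fin n) K) : Set (Fin n) :=
  {i | DiagSim (subm A {i}ᶜ {i}ᶜ) (subm B {i}ᶜ {i}ᶜ)ᵀ}

/-- The pair `{{i,j},{k,l}}` satisfies property `P` for `A`: there is a matrix `C`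
principal minor equivalent to `A[{i,j,k,l}]` in which `{i,j}` is a cut. -/
def PropP {n : ℕ} [Field K] (A : Matrix (Fin n) (Fin n) K) (i j k l : Fin n) : Prop :=
  ∃ C : Matrix (Fin n) (Fin n) K,
    (∀ S : Finset (Fin n), S.Nonempty → S ⊆ {i, j, k, l} → pminor C S = pminor A S) ∧
    IsCutOn C {i, j, k, l} {i, j}

/-- `A` is irreducible: it cannot be brought to block upper triangular form
by a simultaneous permutation of rows and columns. -/
def Irred {m : Type*} [Fintype m] [Zero K] (A : Matrix m m K) : Prop :=
  ∀ S : Finset m, S.Nonempty → S ≠ Finset.univ → ∃ i, i ∉ S ∧ ∃ j ∈ S, A i j ≠ 0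


section Aux

variable {F : Type*} [Field F]

private theorem aux_rank_submatrix_le {m n p q : Type*} [Fintype m] [Fintype n] [Fintype p]
    [Fintype q] [DecidableEq m] [DecidableEq n]
    (M : Matrix m n F) (f : p → m) (g : q → n) :
    (M.submatrix f g).rank ≤ M.rank := by
  let P : Matrix p m F := Matrix.of fun a i => if f a = i then (1:F) else 0
  let Q : Matrix n q F := Matrix.of fun j b => if g b = j then (1:F) else 0
  have h : M.submatrix f g = P * (M * Q) := by
    ext a b
    simp [P, Q, Matrix.mul_apply, ite_and]
  rw [h]
  exact le_trans (Matrix.rank_mul_le_right P (M * Q)) (Matrix.rank_mul_le_left M Q)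

private theorem aux_minor_eq {m n : Type*} [Fintype m] [Fintype n] [DecidableEq m] [DecidableEq n]
    (M : Matrix m n F) (h : M.rank ≤ 1) (i i' : m) (j j' : n) :
    M i j * M i' j' = M i j' * M i' j := by
  by_contra hne
  set B := M.submatrix ![i, i'] ![j, j'] with hB
  have hdet : B.det ≠ 0 := by
    rw [Matrix.det_fin_two]
    simpa [B] using sub_ne_zero_of_ne hne
  have hunit : IsUnit B := (Matrix.isUnit_iff_isUnit_det B).mpr (isUnit_iff_ne_zero.mpr hdet)
  have h2 : B.rank = 2 := by
    rw [Matrix.rank_of_isUnit B hunit]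
    simp
  have hle := le_trans (aux_rank_submatrix_le M ![i, i'] ![j, j']) h
  rw [← hB] at hle
  omega

private theorem aux_rank_le_one {m n : Type*} [Fintype m] [Fintype n]
    (M : Matrix m n F) (u : m → F) (v : n → F) (h : ∀ i j, M i j = u i * v j) :
    M.rank ≤ 1 := by
  have hM : M = vecMulVec u v := by ext i j; simp [vecMulVec, h]
  rw [hM, vecMulVec_eq Unit]
  exact le_trans (Matrix.rank_mul_le_right _ _) (Matrix.rank_le_card_height _)

private theorem aux_one_le_rank {m n : Type*} [Fintype m] [Fintype n] [DecidableEq n]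
    (M : Matrix m n F) (i : m) (j : n) (h : M i j ≠ 0) : 1 ≤ M.rank := by
  rw [Nat.one_le_iff_ne_zero, Matrix.rank]
  intro h0
  have hbot : LinearMap.range M.mulVecLin = ⊥ := Submodule.finrank_eq_zero.mp h0
  have hx : M.mulVec (Pi.single j 1) ∈ LinearMap.range M.mulVecLin := ⟨_, rfl⟩
  rw [hbot, Submodule.mem_bot] at hx
  apply h
  have := congrFun hx i
  simpa [Matrix.mulVec_single] using this

end Aux

/-- Deriving new rank-one row/column partitions from old ones. -/


theorem rank_one_inter_union {n : ℕ} (hn : 2 ≤ n) {K : Type*} [Field K]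
    (A : Matrix (Fin n) (Fin n) K) (hA : ∀ i j : Fin n, i ≠ j → A i j ≠ 0)
    (X₁ X₂ : Finset (Fin n)) (h₁ : (X₁ ∩ X₂).Nonempty) (h₂ : (X₁ᶜ ∩ X₂ᶜ).Nonempty)
    (hr₁ : (subm A X₁ X₁ᶜ).rank = 1) (hr₂ : (subm A X₂ X₂ᶜ).rank = 1) :
    (subm A (X₁ ∩ X₂) (X₁ᶜ ∪ X₂ᶜ)).rank = 1 ∧
    (subm A (X₁ ∪ X₂) (X₁ᶜ ∩ X₂ᶜ)).rank = 1 := by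
  obtain ⟨i₀, hi₀⟩ := h₁
  obtain ⟨j₀, hj₀⟩ := h₂
  rw [Finset.mem_inter] at hi₀ hj₀
  obtain ⟨hi₀1, hi₀2⟩ := hi₀
  obtain ⟨hj₀1, hj₀2⟩ := hj₀
  rw [Finset.mem_compl] at hj₀1 hj₀2
  have key₁ : ∀ i ∈ X₁, ∀ i' ∈ X₁, ∀ j ∈ X₁ᶜ, ∀ j' ∈ X₁ᶜ,
      A i j * A i' j' = A i j' * A i' j := by
    intro i hi i' hi' j hj j' hj'
    exact aux_minor_eq (subm A X₁ X₁ᶜ) hr₁.le ⟨i, hi⟩ ⟨i', hi'⟩ ⟨j, hj⟩ ⟨j', hj'⟩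
  have key₂ : ∀ i ∈ X₂, ∀ i' ∈ X₂, ∀ j ∈ X₂ᶜ, ∀ j' ∈ X₂ᶜ,
      A i j * A i' j' = A i j' * A i' j := by
    intro i hi i' hi' j hj j' hj'
    exact aux_minor_eq (subm A X₂ X₂ᶜ) hr₂.le ⟨i, hi⟩ ⟨i', hi'⟩ ⟨j, hj⟩ ⟨j', hj'⟩
  have hij₀ : i₀ ≠ j₀ := fun h => hj₀1 (h ▸ hi₀1)
  have hz : A i₀ j₀ ≠ 0 := hA i₀ j₀ hij₀
  have cross : ∀ i j, (i ∈ X₁ ∧ j ∉ X₁) ∨ (i ∈ X₂ ∧ j ∉ X₂) →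
      A i j = A i j₀ * (A i₀ j / A i₀ j₀) := by
    intro i j hij
    have hmain : A i j * A i₀ j₀ = A i j₀ * A i₀ j := by
      rcases hij with ⟨hi, hj⟩ | ⟨hi, hj⟩
      · exact key₁ i hi i₀ hi₀1 j (Finset.mem_compl.mpr hj) j₀ (Finset.mem_compl.mpr hj₀1)
      · exact key₂ i hi i₀ hi₀2 j (Finset.mem_compl.mpr hj) j₀ (Finset.mem_compl.mpr hj₀2)
    field_simp
    linear_combination hmain
  constructor
  · refine le_antisymm ?_ ?_
    · refine aux_rank_le_one _ (fun i => A i.1 j₀) (fun j => A i₀ j.1 / A i₀ j₀) ?_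
      rintro ⟨i, hi⟩ ⟨j, hj⟩
      rw [Finset.mem_inter] at hi
      rcases Finset.mem_union.mp hj with hj' | hj'
      · exact cross i j (Or.inl ⟨hi.1, Finset.mem_compl.mp hj'⟩)
      · exact cross i j (Or.inr ⟨hi.2, Finset.mem_compl.mp hj'⟩)
    · refine aux_one_le_rank _ ⟨i₀, Finset.mem_inter.mpr ⟨hi₀1, hi₀2⟩⟩
        ⟨j₀, Finset.mem_union.mpr (Or.inl (Finset.mem_compl.mpr hj₀1))⟩ ?_
      exact hz
  · refine le_antisymm ?_ ?_
    · refine aux_rank_le_one _ (fun i => A i.1 j₀) (fun j => A i₀ j.1 / A i₀ j₀) ?_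
      rintro ⟨i, hi⟩ ⟨j, hj⟩
      rw [Finset.mem_inter] at hj
      rcases Finset.mem_union.mp hi with hi' | hi'
      · exact cross i j (Or.inl ⟨hi', Finset.mem_compl.mp hj.1⟩)
      · exact cross i j (Or.inr ⟨hi', Finset.mem_compl.mp hj.2⟩)
    · refine aux_one_le_rank _ ⟨i₀, Finset.mem_union.mpr (Or.inl hi₀1)⟩
        ⟨j₀, Finset.mem_inter.mpr ⟨Finset.mem_compl.mpr hj₀1, Finset.mem_compl.mpr hj₀2⟩⟩ ?_
      exact hz

end PMAP
end

section
/- Let n ≥ 5 and let A ∈ 𝔽^{n×n} satisfy property R. Then for every S ⊆ [n] with |S| ≥ 5, the principal submatrix A[S] (viewed as a square matrix indexed by S) also satisfies property R. -/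
/-!
Restricting to a principal submatrix only shrinks the blocks `A[X, Y]`, so ranks can only
drop. A rank-one `2 × 2` block of `A[S]` is a rank-one block of `A`; property `R` for `A`
gives a rank-one cut `A[X, X̄]`, and its restriction `A[X ∩ S, S ∖ X]` still has rank one,
since it has rank at most one and contains a nonzero off-diagonal entry.
-/

namespace PMAP

open Matrix

variable {K : Type*}

theorem subm_submatrix_embedding {α β : Type*} (A : Matrix β β K) (f : α ↪ β) (X Y : Finset α) :
    subm (A.submatrix f f) X Y =
      (subm A (X.map f) (Y.map f)).submatrix (X.equivMap f) (Y.equivMap f) :=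
  rfl

section Rank

variable [Field K] {α β : Type*}

theorem one_le_rank_of_ne_zero [Fintype β] {A : Matrix α β K} {i : α} {j : β}
    (h : A i j ≠ 0) : 1 ≤ A.rank := by
  classical
  refine Nat.one_le_iff_ne_zero.mpr fun h0 => h ?_
  rw [Matrix.rank, Submodule.finrank_eq_zero, LinearMap.range_eq_bot] at h0
  simpa using congr_fun (LinearMap.congr_fun h0 (Pi.single j 1)) i

theorem rank_subm_le_of_subset [DecidableEq α] {A : Matrix α α K} {X X' Y Y' : Finset α}
    (hX : X' ⊆ X) (hY : Y' ⊆ Y) : (subm A X' Y').rank ≤ (subm A X Y).rank :=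
  rank_submatrix_le (subm A X Y) (fun x : X' => (⟨x, hX x.2⟩ : X))
    (fun y : Y' => (⟨y, hY y.2⟩ : Y))

theorem rank_subm_submatrix_embedding (A : Matrix β β K) (f : α ↪ β) (X Y : Finset α) :
    (subm (A.submatrix f f) X Y).rank = (subm A (X.map f) (Y.map f)).rank := by
  rw [subm_submatrix_embedding, rank_submatrix]

end Rank

theorem PropR.submatrix_embedding [Field K] {α β : Type*} [Fintype α] [DecidableEq α]
    [Fintype β] [DecidableEq β] {A : Matrix β β K} (hA : PropR A) (f : α ↪ β) :
    PropR (A.submatrix f f) := by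
  obtain ⟨hoff, hcut⟩ := hA
  have hf : ∀ {a b : α}, a ≠ b → f a ≠ f b := f.injective.ne
  refine ⟨fun i j hij => hoff _ _ (hf hij), ?_⟩
  intro i j k l hij hik hil hjk hjl hkl hrank
  rw [rank_subm_submatrix_embedding, Finset.map_insert, Finset.map_singleton,
    Finset.map_insert, Finset.map_singleton] at hrank
  obtain ⟨X, hiX, hjX, hkX, hlX, hX⟩ :=
    hcut (f i) (f j) (f k) (f l) (hf hij) (hf hik) (hf hil) (hf hjk) (hf hjl) (hf hkl) hrank
  set Y := X.preimage f f.injective.injOn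
  have hiY : i ∈ Y := Finset.mem_preimage.mpr hiX
  have hkY : k ∉ Y := mt Finset.mem_preimage.mp hkX
  refine ⟨Y, hiY, Finset.mem_preimage.mpr hjX, hkY, mt Finset.mem_preimage.mp hlX, ?_⟩
  have hYc : Yᶜ.map f ⊆ Xᶜ := by
    intro b hb
    obtain ⟨a, ha, rfl⟩ := Finset.mem_map.mp hb
    simpa [Y] using ha
  refine le_antisymm ?_ (one_le_rank_of_ne_zero (i := ⟨i, hiY⟩)
    (j := ⟨k, Finset.mem_compl.mpr hkY⟩) (hoff _ _ (hf hik)))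
  rw [← hX, rank_subm_submatrix_embedding]
  exact rank_subm_le_of_subset (Finset.map_subset_iff_subset_preimage.mpr subset_rfl) hYc

theorem propR_submatrix_general {n : ℕ} {K : Type*} [Field K]
    (A : Matrix (Fin n) (Fin n) K) (hA : PropR A)
    (S : Finset (Fin n)) :
    PropR (subm A S S) :=
  hA.submatrix_embedding (Function.Embedding.subtype (· ∈ S))

/-- Property `R` is inherited by principal submatrices of order at
least 5. -/
theorem propR_submatrix {n : ℕ} (hn : 5 ≤ n) {K : Type*} [Field K]
    (A : Matrix (Fin n) (Fin n) K) (hA : PropR A)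
    (S : Finset (Fin n)) (hS : 5 ≤ S.card) :
    PropR (subm A S S) :=
  propR_submatrix_general A hA S

end PMAP
end

section
/- Let n ≥ 5, let A ∈ 𝔽^{n×n} satisfy property R, let i ∈ [n], and let X ⊆ [n]∖{i} be a cut of the submatrix A[[n]∖{i}]; write X̄ = [n]∖(X ∪ {i}). Then (rank(A[X ∪ {i}, X̄]) = 1 or rank(A[X, X̄ ∪ {i}]) = 1), and (rank(A[X̄ ∪ {i}, X]) = 1 or rank(A[X̄, X ∪ {i}]) = 1). -/
namespace PMAP

open Matrix

variable {K : Type*}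

section AuxLemmas

variable [Field K]

/-- All `2×2` minors of a matrix of rank at most one vanish. -/
lemma minor_eq_of_rank_le_one {α β : Type*} [Fintype α] [Fintype β]
    {M : Matrix α β K} (h : M.rank ≤ 1) (a a' : α) (b b' : β) :
    M a b * M a' b' = M a b' * M a' b := by
  classical
  rw [Matrix.rank_eq_finrank_span_cols] at h
  obtain ⟨v, hv⟩ := finrank_le_one_iff.mp h
  have hcol : ∀ b : β, ∃ c : K, ∀ a : α, M a b = c * (v : α → K) a := by
    intro b
    obtain ⟨c, hc⟩ := hv ⟨Mᵀ b, Submodule.subset_span (Set.mem_range_self b)⟩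
    refine ⟨c, fun a => ?_⟩
    have := congrFun (congrArg Subtype.val hc) a
    simpa using this.symm
  obtain ⟨c, hc⟩ := hcol b
  obtain ⟨c', hc'⟩ := hcol b'
  rw [hc a, hc a', hc' a, hc' a']; ring

/-- A matrix whose entries factor as `u a * v b` has rank at most one. -/
lemma rank_le_one_of_factor {α β : Type*} [Fintype α] [Fintype β]
    {M : Matrix α β K} (u : α → K) (v : β → K) (h : ∀ a b, M a b = u a * v b) :
    M.rank ≤ 1 := by
  have hM : M = Matrix.vecMulVec u v := by
    ext a b; simp [Matrix.vecMulVec, h]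
  rw [hM, Matrix.vecMulVec_eq Unit]
  refine le_trans (Matrix.rank_mul_le_left _ _) ?_
  simpa using Matrix.rank_le_card_width (Matrix.replicateCol Unit u)

/-- A matrix with a nonzero entry has rank at least one. -/
lemma one_le_rank_of_ne_zero_s4 {α β : Type*} [Fintype α] [Fintype β]
    {M : Matrix α β K} {a : α} {b : β} (h : M a b ≠ 0) : 1 ≤ M.rank := by
  rw [Matrix.rank_eq_finrank_span_cols]
  have hu : (Mᵀ b) ≠ 0 := fun h0 => h (by simpa using congrFun h0 a)
  calc 1 = Module.finrank K (Submodule.span K {Mᵀ b}) :=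
        (finrank_span_singleton hu).symm
    _ ≤ _ := Submodule.finrank_mono (Submodule.span_mono
        (Set.singleton_subset_iff.mpr (Set.mem_range_self b)))

/-- The key step: if `S` and `T` are disjoint sets of size at least two, not containing
`i`, and `A[S,T]` has rank at most one, then (assuming property `R`) row `i` or column
`i` can be adjoined keeping rank one. -/
lemma main_step {n : ℕ} (A : Matrix (Fin n) (Fin n) K) (hA : PropR A)
    (i : Fin n) (S T : Finset (Fin n)) (hd : Disjoint S T) (hiS : i ∉ S) (hiT : i ∉ T)
    (hS : 2 ≤ S.card) (hT : 2 ≤ T.card) (hr : (subm A S T).rank ≤ 1) :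
    (subm A (insert i S) T).rank = 1 ∨ (subm A S (insert i T)).rank = 1 := by
  classical
  -- basic nonvanishing facts
  have hne : ∀ a b : Fin n, a ∈ S → b ∈ T → A a b ≠ 0 := fun a b ha hb =>
    hA.1 a b (fun h => (Finset.disjoint_left.mp hd ha) (h ▸ hb))
  have hST : ∀ a b : Fin n, a ∈ S → b ∈ T → a ≠ b := fun a b ha hb h =>
    (Finset.disjoint_left.mp hd ha) (h ▸ hb)
  -- minors of A[S,T] vanish
  have hmin : ∀ a a' b b' : Fin n, a ∈ S → a' ∈ S → b ∈ T → b' ∈ T →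
      A a b * A a' b' = A a b' * A a' b := by
    intro a a' b b' ha ha' hb hb'
    exact minor_eq_of_rank_le_one hr ⟨a, ha⟩ ⟨a', ha'⟩ ⟨b, hb⟩ ⟨b', hb'⟩
  obtain ⟨j0, hj0, j1, hj1, hjne⟩ := Finset.one_lt_card.mp hS
  obtain ⟨k0, hk0, k1, hk1, hkne⟩ := Finset.one_lt_card.mp hT
  by_cases hP : ∀ k ∈ T, ∀ k' ∈ T, A i k * A j0 k' = A i k' * A j0 k
  · -- row i is proportional to row j0 on T
    left
    have hfac : ∀ (a : (insert i S : Finset (Fin n))) (b : (T : Finset (Fin n))),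
        (subm A (insert i S) T) a b =
          (A a.1 k0 / A j0 k0) * A j0 b.1 := by
      rintro ⟨a, ha⟩ ⟨b, hb⟩
      have hz : A j0 k0 ≠ 0 := hne _ _ hj0 hk0
      rw [div_mul_eq_mul_div, eq_div_iff hz]
      rcases Finset.mem_insert.mp ha with h | h
      · subst h
        have := hP b hb k0 hk0
        show A a b * A j0 k0 = A a k0 * A j0 b
        linear_combination this
      · show A a b * A j0 k0 = A a k0 * A j0 b
        linear_combination hmin a j0 b k0 h hj0 hb hk0
    refine le_antisymm (rank_le_one_of_factor _ _ hfac) ?_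
    exact one_le_rank_of_ne_zero_s4 (M := subm A (insert i S) T)
      (a := ⟨j0, Finset.mem_insert_of_mem hj0⟩) (b := ⟨k0, hk0⟩) (hne _ _ hj0 hk0)
  by_cases hQ : ∀ j ∈ S, ∀ j' ∈ S, A j i * A j' k0 = A j' i * A j k0
  · -- column i is proportional to column k0 on S
    right
    have hfac : ∀ (a : (S : Finset (Fin n))) (b : (insert i T : Finset (Fin n))),
        (subm A S (insert i T)) a b =
          (A a.1 k0 / A j0 k0) * A j0 b.1 := by
      rintro ⟨a, ha⟩ ⟨b, hb⟩
      have hz : A j0 k0 ≠ 0 := hne _ _ hj0 hk0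
      rw [div_mul_eq_mul_div, eq_div_iff hz]
      rcases Finset.mem_insert.mp hb with h | h
      · subst h
        have := hQ a ha j0 hj0
        show A a b * A j0 k0 = A a k0 * A j0 b
        linear_combination this
      · show A a b * A j0 k0 = A a k0 * A j0 b
        linear_combination hmin a j0 b k0 ha hj0 h hk0
    refine le_antisymm (rank_le_one_of_factor _ _ hfac) ?_
    exact one_le_rank_of_ne_zero_s4 (M := subm A S (insert i T))
      (a := ⟨j0, hj0⟩) (b := ⟨k0, Finset.mem_insert_of_mem hk0⟩) (hne _ _ hj0 hk0)
  -- both fail: derive a contradiction from property R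
  exfalso
  push_neg at hP hQ
  obtain ⟨k, hk, k', hk', hPk⟩ := hP
  obtain ⟨j, hj, j', hj', hQj⟩ := hQ
  have hkk' : k ≠ k' := by rintro rfl; exact hPk rfl
  have hjj' : j ≠ j' := by
    rintro rfl; exact hQj rfl
  -- transfer 1 : the minor with rows {i, j} and columns {k, k'} is nonzero
  have hT1 : A i k * A j k' ≠ A i k' * A j k := by
    intro h1
    have h2 : A j k * A j0 k' = A j k' * A j0 k := hmin j j0 k k' hj hj0 hk hk'
    have hz : A j k' ≠ 0 := hne _ _ hj hk'
    apply hPk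
    apply mul_right_cancel₀ hz
    linear_combination A j0 k' * h1 + A i k' * h2
  -- transfer 2 : the minor with rows {j, j'} and columns {k, i} is nonzero
  have hT2 : A j k * A j' i ≠ A j i * A j' k := by
    intro h1
    have h2 : A j k * A j' k0 = A j k0 * A j' k := hmin j j' k k0 hj hj' hk hk0
    have hz : A j' k ≠ 0 := hne _ _ hj' hk
    apply hQj
    apply mul_right_cancel₀ hz
    linear_combination -(A j' k0 * h1) + A j' i * h2
  -- the 2×2 submatrix A[{j,j'},{k,k'}] has rank one
  have hrank2 : (subm A ({j, j'} : Finset (Fin n)) ({k, k'} : Finset (Fin n))).rank = 1 := by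
    have hfac : ∀ (a : ({j, j'} : Finset (Fin n))) (b : ({k, k'} : Finset (Fin n))),
        (subm A {j, j'} {k, k'}) a b = (A a.1 k / A j k) * A j b.1 := by
      rintro ⟨a, ha⟩ ⟨b, hb⟩
      have hz : A j k ≠ 0 := hne _ _ hj hk
      rw [div_mul_eq_mul_div, eq_div_iff hz]
      have haS : a ∈ S := by
        rcases Finset.mem_insert.mp ha with h | h
        · exact h ▸ hj
        · exact (Finset.mem_singleton.mp h) ▸ hj'
      have hbT : b ∈ T := by
        rcases Finset.mem_insert.mp hb with h | h
        · exact h ▸ hk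
        · exact (Finset.mem_singleton.mp h) ▸ hk'
      show A a b * A j k = A a k * A j b
      linear_combination hmin a j b k haS hj hbT hk
    refine le_antisymm (rank_le_one_of_factor _ _ hfac) ?_
    exact one_le_rank_of_ne_zero_s4 (M := subm A {j, j'} {k, k'})
      (a := ⟨j, Finset.mem_insert_self _ _⟩) (b := ⟨k, Finset.mem_insert_self _ _⟩)
      (hne _ _ hj hk)
  obtain ⟨Y, hjY, hj'Y, hkY, hk'Y, hrY⟩ :=
    hA.2 j j' k k' hjj' (hST _ _ hj hk) (hST _ _ hj hk') (hST _ _ hj' hk)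
      (hST _ _ hj' hk') hkk' hrank2
  by_cases hiY : i ∈ Y
  · -- rows i, j are in Y and columns k, k' in Yᶜ : minor vanishes, contradiction
    exact hT1 (minor_eq_of_rank_le_one (le_of_eq hrY) ⟨i, hiY⟩ ⟨j, hjY⟩
      ⟨k, Finset.mem_compl.mpr hkY⟩ ⟨k', Finset.mem_compl.mpr hk'Y⟩)
  · -- rows j, j' in Y and columns k, i in Yᶜ : minor vanishes, contradiction
    exact hT2 (minor_eq_of_rank_le_one (le_of_eq hrY) ⟨j, hjY⟩ ⟨j', hj'Y⟩
      ⟨k, Finset.mem_compl.mpr hkY⟩ ⟨i, Finset.mem_compl.mpr hiY⟩)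

end AuxLemmas

/-- Lifting a cut of `A[[n]∖{i}]` to rank-one conditions in `A`. -/
theorem lift_of_cut {n : ℕ} (hn : 5 ≤ n) {K : Type*} [Field K]
    (A : Matrix (Fin n) (Fin n) K) (hA : PropR A) (i : Fin n)
    (X : Finset (Fin n)) (hX : IsCutOn A ({i}ᶜ) X) :
    ((subm A (insert i X) (({i}ᶜ : Finset (Fin n)) \ X)).rank = 1 ∨
      (subm A X (insert i (({i}ᶜ : Finset (Fin n)) \ X))).rank = 1) ∧
    ((subm A (insert i (({i}ᶜ : Finset (Fin n)) \ X)) X).rank = 1 ∨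
      (subm A (({i}ᶜ : Finset (Fin n)) \ X) (insert i X)).rank = 1) := by
  obtain ⟨hsub, hcardX, hcardI, hr1, hr2⟩ := hX
  set Xb : Finset (Fin n) := ({i}ᶜ : Finset (Fin n)) \ X with hXb
  have hiX : i ∉ X := fun h => by simpa using hsub h
  have hiXb : i ∉ Xb := fun h => by simp [hXb] at h
  have hd : Disjoint X Xb := Finset.disjoint_sdiff
  have hcardXb : 2 ≤ Xb.card := by
    have h1 : Xb.card = ({i}ᶜ : Finset (Fin n)).card - X.card := by
      rw [hXb]; exact Finset.card_sdiff_of_subset hsub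
    have h2 : X.card ≤ ({i}ᶜ : Finset (Fin n)).card := Finset.card_le_card hsub
    omega
  constructor
  · exact main_step A hA i X Xb hd hiX hiXb hcardX hcardXb hr1
  · exact main_step A hA i Xb X hd.symm hiXb hiX hcardXb hcardX hr2

end PMAP
end

section
/- Let n ≥ 5 and let A, B ∈ 𝔽^{n×n} be such that all off-diagonal entries of A are nonzero and A ≡PME≤3 B. If |D₁(A,B) ∪ D₂(A,B)| equals 3 or 4, then D₁(A,B) ∩ D₂(A,B) = ∅. -/
namespace PMAP

open Matrix

variable {K : Type*}

section Aux

variable [Field K] {n : ℕ}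

lemma pminor_singleton (A : Matrix (Fin n) (Fin n) K) (a : Fin n) :
    pminor A {a} = A a a := by
  have hb : Function.Bijective (fun _ : Fin 1 => (⟨a, Finset.mem_singleton_self a⟩ : ({a} : Finset (Fin n)))) := by
    rw [Fintype.bijective_iff_injective_and_card]
    constructor
    · intro x y _; exact Subsingleton.elim x y
    · simp
  rw [pminor, ← Matrix.det_submatrix_equiv_self (Equiv.ofBijective _ hb), Matrix.det_fin_one]
  rfl

lemma pminor_pair (A : Matrix (Fin n) (Fin n) K) {a b : Fin n} (hab : a ≠ b) :
    pminor A {a, b} = A a a * A b b - A a b * A b a := by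
  have ha : a ∈ ({a, b} : Finset (Fin n)) := by simp
  have hb' : b ∈ ({a, b} : Finset (Fin n)) := by simp
  set f : Fin 2 → ({a, b} : Finset (Fin n)) := ![⟨a, ha⟩, ⟨b, hb'⟩] with hf
  have hbij : Function.Bijective f := by
    rw [Fintype.bijective_iff_injective_and_card]
    constructor
    · intro x y hxy
      fin_cases x <;> fin_cases y <;> simp_all [f]
    · simp only [Fintype.card_fin, Fintype.card_coe]
      rw [Finset.card_insert_of_notMem (by simp [hab]), Finset.card_singleton]
  rw [pminor, ← Matrix.det_submatrix_equiv_self (Equiv.ofBijective f hbij), Matrix.det_fin_two]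
  rfl

lemma pminor_triple (A : Matrix (Fin n) (Fin n) K) {a b c : Fin n}
    (hab : a ≠ b) (hac : a ≠ c) (hbc : b ≠ c) :
    pminor A {a, b, c} =
      A a a * A b b * A c c - A a a * A b c * A c b - A a b * A b a * A c c +
        A a b * A b c * A c a + A a c * A b a * A c b - A a c * A b b * A c a := by
  have ha : a ∈ ({a, b, c} : Finset (Fin n)) := by simp
  have hb' : b ∈ ({a, b, c} : Finset (Fin n)) := by simp
  have hc' : c ∈ ({a, b, c} : Finset (Fin n)) := by simp
  set f : Fin 3 → ({a, b, c} : Finset (Fin n)) := ![⟨a, ha⟩, ⟨b, hb'⟩, ⟨c, hc'⟩] with hf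
  have hbij : Function.Bijective f := by
    rw [Fintype.bijective_iff_injective_and_card]
    constructor
    · intro x y hxy
      fin_cases x <;> fin_cases y <;> simp_all [f]
    · simp only [Fintype.card_fin, Fintype.card_coe]
      rw [Finset.card_insert_of_notMem (by simp [hab, hac]),
        Finset.card_insert_of_notMem (by simp [hbc]), Finset.card_singleton]
  rw [pminor, ← Matrix.det_submatrix_equiv_self (Equiv.ofBijective f hbij), Matrix.det_fin_three]
  rfl

variable {A B : Matrix (Fin n) (Fin n) K}

lemma pme_diag (h3 : PMEupto 3 A B) (a : Fin n) : A a a = B a a := by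
  have h := h3 {a} ⟨a, Finset.mem_singleton_self a⟩ (by simp)
  rwa [pminor_singleton, pminor_singleton] at h

lemma pme_pair (h3 : PMEupto 3 A B) {a b : Fin n} (hab : a ≠ b) :
    A a b * A b a = B a b * B b a := by
  have hp := h3 {a, b} ⟨a, by simp⟩ (le_trans (Finset.card_insert_le _ _) (by simp))
  rw [pminor_pair A hab, pminor_pair B hab] at hp
  linear_combination (pme_diag h3 a) * A b b + B a a * (pme_diag h3 b) - hp

lemma pme_cyc (h3 : PMEupto 3 A B) {a b c : Fin n}
    (hab : a ≠ b) (hac : a ≠ c) (hbc : b ≠ c) :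
    A a b * A b c * A c a + A a c * A c b * A b a
      = B a b * B b c * B c a + B a c * B c b * B b a := by
  have hcard : ({a, b, c} : Finset (Fin n)).card = 3 := by
    rw [Finset.card_insert_of_notMem (by simp [hab, hac]),
      Finset.card_insert_of_notMem (by simp [hbc]), Finset.card_singleton]
  have hp := h3 {a, b, c} ⟨a, by simp⟩ (le_of_eq hcard)
  rw [pminor_triple A hab hac hbc, pminor_triple B hab hac hbc] at hp
  have ha := pme_diag h3 a
  have hb := pme_diag h3 b
  have hc := pme_diag h3 c
  have hab2 := pme_pair h3 hab
  have hac2 := pme_pair h3 hac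
  have hbc2 := pme_pair h3 hbc
  linear_combination hp - (ha * (A b b * A c c) + B a a * hb * A c c + B a a * B b b * hc)
    + (ha * (A b c * A c b) + B a a * hbc2) + (hab2 * A c c + B a b * B b a * hc)
    + (hac2 * A b b + B a c * B c a * hb)

end Aux

/-- If `|D₁(A,B) ∪ D₂(A,B)|` is 3 or 4, then `D₁(A,B)` and
`D₂(A,B)` are disjoint. -/
theorem d1_inter_d2_empty {n : ℕ} (hn : 5 ≤ n) {K : Type*} [Field K]
    (A B : Matrix (Fin n) (Fin n) K)
    (hA : ∀ i j : Fin n, i ≠ j → A i j ≠ 0)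
    (h3 : PMEupto 3 A B)
    (hcard : (D1 A B ∪ D2 A B).ncard = 3 ∨ (D1 A B ∪ D2 A B).ncard = 4) :
    D1 A B ∩ D2 A B = ∅ := by
  by_contra hne
  obtain ⟨i, hi1, hi2⟩ := Set.nonempty_iff_ne_empty.mpr hne
  obtain ⟨D, hD0, hDs⟩ := hi1
  obtain ⟨E, hE0, hEs⟩ := hi2
  have memc : ∀ j : Fin n, j ≠ i → j ∈ ({i}ᶜ : Finset (Fin n)) := fun j hj => by
    simp [Finset.mem_compl, hj]
  set d : Fin n → K := fun j => if h : j ∈ ({i}ᶜ : Finset (Fin n)) then D ⟨j, h⟩ else 1 with hd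
  set e : Fin n → K := fun j => if h : j ∈ ({i}ᶜ : Finset (Fin n)) then E ⟨j, h⟩ else 1 with he
  have hdne : ∀ j, d j ≠ 0 := by
    intro j
    show (if h : j ∈ ({i}ᶜ : Finset (Fin n)) then D ⟨j, h⟩ else 1) ≠ 0
    by_cases h : j ∈ ({i}ᶜ : Finset (Fin n))
    · rw [dif_pos h]; exact hD0 _
    · rw [dif_neg h]; exact one_ne_zero
  have hene : ∀ j, e j ≠ 0 := by
    intro j
    show (if h : j ∈ ({i}ᶜ : Finset (Fin n)) then E ⟨j, h⟩ else 1) ≠ 0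
    by_cases h : j ∈ ({i}ᶜ : Finset (Fin n))
    · rw [dif_pos h]; exact hE0 _
    · rw [dif_neg h]; exact one_ne_zero
  have hdB : ∀ j k, j ≠ i → k ≠ i → B j k = (d j)⁻¹ * A j k * d k := by
    intro j k hj hk
    have hdj : d j = D ⟨j, memc j hj⟩ := dif_pos (memc j hj)
    have hdk : d k = D ⟨k, memc k hk⟩ := dif_pos (memc k hk)
    rw [hdj, hdk]
    exact hDs ⟨j, memc j hj⟩ ⟨k, memc k hk⟩
  have heB : ∀ j k, j ≠ i → k ≠ i → B k j = (e j)⁻¹ * A j k * e k := by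
    intro j k hj hk
    have hej : e j = E ⟨j, memc j hj⟩ := dif_pos (memc j hj)
    have hek : e k = E ⟨k, memc k hk⟩ := dif_pos (memc k hk)
    rw [hej, hek]
    exact hEs ⟨j, memc j hj⟩ ⟨k, memc k hk⟩
  have hpairB : ∀ j, j ≠ i → B i j * B j i = A i j * A j i :=
    fun j hj => (pme_pair h3 (Ne.symm hj)).symm
  have hXne : ∀ j, j ≠ i → B i j ≠ 0 := by
    intro j hj h0
    have h' := hpairB j hj
    rw [h0, zero_mul] at h'
    exact (mul_ne_zero (hA i j (Ne.symm hj)) (hA j i hj)) h'.symm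
  have dich : ∀ j k, j ≠ i → k ≠ i → j ≠ k →
      B i j / (A i j * d j) = B i k / (A i k * d k) ∨
      B i j * e j / A j i = B i k * e k / A k i := by
    intro j k hj hk hjk
    have hAij := hA i j (Ne.symm hj)
    have hAji := hA j i hj
    have hAik := hA i k (Ne.symm hk)
    have hAki := hA k i hk
    have hAjk := hA j k hjk
    have hAkj := hA k j (Ne.symm hjk)
    have hcy := pme_cyc h3 (a := i) (b := j) (c := k) (Ne.symm hj) (Ne.symm hk) hjk
    have hBjk' : B j k * d j = A j k * d k := by
      rw [hdB j k hj hk]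
      field_simp [hdne j]
    have hBkj' : B k j * d k = A k j * d j := by
      rw [hdB k j hk hj]
      field_simp [hdne k]
    have h2j := hpairB j hj
    have h2k := hpairB k hk
    have key : (B i j * (A i k * d k) - B i k * (A i j * d j)) *
        (B i j * d k * (A j k * A k i) - B i k * d j * (A k j * A j i)) = 0 := by
      linear_combination (-(B i j * B i k * d j * d k)) * hcy
        + (-(B i j ^ 2 * B i k * d k * B k i)) * hBjk'
        + (-(B i j ^ 2 * d k ^ 2 * A j k)) * h2k
        + (-(B i j * B i k ^ 2 * d j * B j i)) * hBkj'
        + (-(B i k ^ 2 * d j ^ 2 * A k j)) * h2j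
    rcases mul_eq_zero.mp key with h | h
    · left
      rw [div_eq_div_iff (mul_ne_zero hAij (hdne j)) (mul_ne_zero hAik (hdne k))]
      linear_combination h
    · right
      have hg : A j k * e k * d k = A k j * d j * e j := by
        have h2' : (d k)⁻¹ * A k j * d j = (e j)⁻¹ * A j k * e k :=
          (hdB k j hk hj).symm.trans (heB j k hj hk)
        field_simp [hdne k, hene j] at h2'
        linear_combination -h2'
      have key2 : (B i j * e j * A k i - B i k * e k * A j i) * (d k * A j k) = 0 := by
        linear_combination (e j) * h - (B i k * A j i) * hg
      have h0 := (mul_eq_zero.mp key2).resolve_right (mul_ne_zero (hdne k) hAjk)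
      rw [div_eq_div_iff hAji hAki]
      linear_combination h0
  haveI : Nontrivial (Fin n) := Fin.nontrivial_iff_two_le.mpr (by omega)
  obtain ⟨j₀, hj₀⟩ := exists_ne i
  have main : (∃ C : Fin n → K, (∀ a, C a ≠ 0) ∧ ∀ a b, B a b = (C a)⁻¹ * A a b * C b) ∨
      (∃ C : Fin n → K, (∀ a, C a ≠ 0) ∧ ∀ a b, B b a = (C a)⁻¹ * A a b * C b) := by
    by_cases hT : ∀ j, j ≠ i → B i j / (A i j * d j) = B i j₀ / (A i j₀ * d j₀)
    · left
      obtain ⟨c, hc⟩ : ∃ c, c = B i j₀ / (A i j₀ * d j₀) := ⟨_, rfl⟩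
      have hc0 : c ≠ 0 := by
        rw [hc]
        exact div_ne_zero (hXne j₀ hj₀) (mul_ne_zero (hA i j₀ (Ne.symm hj₀)) (hdne j₀))
      have hTc : ∀ j, j ≠ i → B i j = c * (A i j * d j) := by
        intro j hj
        have h' := hT j hj
        rw [← hc] at h'
        exact (div_eq_iff (mul_ne_zero (hA i j (Ne.symm hj)) (hdne j))).mp h'
      refine ⟨fun j => if j = i then c⁻¹ else d j, ?_, ?_⟩
      · intro j
        show (if j = i then c⁻¹ else d j) ≠ 0
        by_cases h : j = i
        · rw [if_pos h]; exact inv_ne_zero hc0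
        · rw [if_neg h]; exact hdne j
      · intro a b
        show B a b = (if a = i then c⁻¹ else d a)⁻¹ * A a b * (if b = i then c⁻¹ else d b)
        by_cases ha : a = i <;> by_cases hb : b = i
        · rw [if_pos ha, if_pos hb, ha, hb, inv_inv, ← pme_diag h3 i]
          field_simp
        · rw [if_pos ha, if_neg hb, ha, inv_inv]
          linear_combination hTc b hb
        · rw [if_neg ha, if_pos hb, hb]
          have h' := hTc a ha
          have hpa := hpairB a ha
          have hq : (B a i * (c * d a) - A a i) * B i a = 0 := by
            linear_combination (c * d a) * hpa - A a i * h'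
          have hq2 := (mul_eq_zero.mp hq).resolve_right (hXne a ha)
          field_simp [hc0, hdne a]
          linear_combination hq2
        · rw [if_neg ha, if_neg hb]
          exact hdB a b ha hb
    · right
      push_neg at hT
      obtain ⟨j₁, hj₁i, hj₁t⟩ := hT
      have hU : ∀ j, j ≠ i → B i j * e j / A j i = B i j₀ * e j₀ / A j₀ i := by
        intro j hj
        by_cases hjj0 : j = j₀
        · rw [hjj0]
        · have hj1j0 : j₁ ≠ j₀ := by rintro rfl; exact hj₁t rfl
          have hu10 : B i j₁ * e j₁ / A j₁ i = B i j₀ * e j₀ / A j₀ i :=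
            (dich j₁ j₀ hj₁i hj₀ hj1j0).resolve_left hj₁t
          rcases dich j j₀ hj hj₀ hjj0 with h | h
          · have hjj1 : j ≠ j₁ := by rintro rfl; exact hj₁t h
            rcases dich j j₁ hj hj₁i hjj1 with h' | h'
            · exact absurd (h'.symm.trans h) hj₁t
            · exact h'.trans hu10
          · exact h
      obtain ⟨c, hc⟩ : ∃ c, c = B i j₀ * e j₀ / A j₀ i := ⟨_, rfl⟩
      have hc0 : c ≠ 0 := by
        rw [hc]
        exact div_ne_zero (mul_ne_zero (hXne j₀ hj₀) (hene j₀)) (hA j₀ i hj₀)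
      have hUc : ∀ j, j ≠ i → B i j * e j = c * A j i := by
        intro j hj
        have h' := hU j hj
        rw [← hc] at h'
        exact (div_eq_iff (hA j i hj)).mp h'
      refine ⟨fun j => if j = i then c else e j, ?_, ?_⟩
      · intro j
        show (if j = i then c else e j) ≠ 0
        by_cases h : j = i
        · rw [if_pos h]; exact hc0
        · rw [if_neg h]; exact hene j
      · intro a b
        show B b a = (if a = i then c else e a)⁻¹ * A a b * (if b = i then c else e b)
        by_cases ha : a = i <;> by_cases hb : b = i
        · rw [if_pos ha, if_pos hb, ha, hb, ← pme_diag h3 i]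
          field_simp
        · rw [if_pos ha, if_neg hb, ha]
          have h' := hUc b hb
          have hpb := hpairB b hb
          have hq : (B b i * c - A i b * e b) * B i b = 0 := by
            linear_combination c * hpb - A i b * h'
          have hq2 := (mul_eq_zero.mp hq).resolve_right (hXne b hb)
          field_simp [hc0]
          linear_combination hq2
        · rw [if_neg ha, if_pos hb, hb]
          have h' := hUc a ha
          field_simp [hene a]
          linear_combination h'
        · rw [if_neg ha, if_neg hb]
          exact heB a b ha hb
  have huniv : D1 A B ∪ D2 A B = Set.univ := by
    rcases main with ⟨C, hC0, hC⟩ | ⟨C, hC0, hC⟩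
    · refine Set.eq_univ_of_forall fun m => Or.inl ?_
      exact ⟨fun a => C a.1, fun a => hC0 a.1, fun a b => hC a.1 b.1⟩
    · refine Set.eq_univ_of_forall fun m => Or.inr ?_
      exact ⟨fun a => C a.1, fun a => hC0 a.1, fun a b => hC a.1 b.1⟩
  rw [huniv, Set.ncard_univ, Nat.card_eq_fintype_card, Fintype.card_fin] at hcard
  omega

end PMAP
end

section
/- Let n ≥ 4 and let A, B ∈ 𝔽^{n×n} be such that A satisfies property R and A ≡PME≤4 B. Let i₁, i₂, i₃, i₄ ∈ [n] be four distinct indices with D₁(A,B) = {i₁, i₂} and D₂(A,B) = {i₃, i₄}. Then there exists X ⊆ [n] with i₁, i₂ ∈ X and i₃, i₄ ∈ X̄ such that X is a cut of A. -/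
/-!
Gluing the diagonal similarities that witness `i₁, i₂ ∈ D₁(A,B)` gives an invertible diagonal
`D` with `D B D⁻¹ = A` except at the entries `(i₁,i₂), (i₂,i₁)`; likewise `i₃, i₄ ∈ D₂(A,B)`
give `E` with `E Bᵀ E⁻¹ = A` except at `(i₃,i₄), (i₄,i₃)`. Hence `N = A D E` is symmetric off
these two pairs, `M = D B E` is `N` with its `{i₁,i₂}`-entries swapped and `Mᵀ` is `N` with its
`{i₃,i₄}`-entries swapped. Neither pair is symmetric in `N`, as otherwise `A` would be diagonally
similar to `B` (forcing `i₃ ∈ D₁`) or to `Bᵀ` (forcing `i₁ ∈ D₂`). Now `M` and `N` have the same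
`4 × 4` principal minor on `{i₁,…,i₄}`, and the difference of these minors factors as
`(N₁₂ - N₂₁)(N₃₄ - N₄₃)(N₁₃N₂₄ - N₁₄N₂₃)`, so `A[{i₁,i₂},{i₃,i₄}]` has rank one. Property R
yields `X` with `rank A[X, X̄] = 1`, and the symmetry of `N` across `X` gives the same bound
for `A[X̄, X]`.
-/

namespace PMAP

open Matrix

variable {K : Type*}

section General

variable {m R : Type*} [DecidableEq m] [CommRing R]

theorem subm_mul_diagonal [Fintype m] (M : Matrix m m R) (g : m → R) (S T : Finset m) :
    subm (M * diagonal g) S T = subm M S T * diagonal fun q : T => g q := by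
  ext p q
  simp [subm, mul_diagonal]

theorem subm_diagonal_mul [Fintype m] (M : Matrix m m R) (g : m → R) (S T : Finset m) :
    subm (diagonal g * M) S T = (diagonal fun p : S => g p) * subm M S T := by
  ext p q
  simp [subm, diagonal_mul]

theorem pminor_mul_diagonal [Fintype m] (M : Matrix m m R) (g : m → R) (S : Finset m) :
    pminor (M * diagonal g) S = pminor M S * ∏ p ∈ S, g p := by
  rw [pminor, subm_mul_diagonal, det_mul, det_diagonal, Finset.prod_coe_sort S g, pminor]

theorem pminor_diagonal_mul [Fintype m] (M : Matrix m m R) (g : m → R) (S : Finset m) :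
    pminor (diagonal g * M) S = (∏ p ∈ S, g p) * pminor M S := by
  rw [pminor, subm_diagonal_mul, det_mul, det_diagonal, Finset.prod_coe_sort S g, pminor]

theorem pmeUpto_diagonal_mul_mul_diagonal [Fintype m] {k : ℕ} {A B : Matrix m m R}
    (h : PMEupto k A B) (d e : m → R) :
    PMEupto k (diagonal d * B * diagonal e) (A * diagonal (d * e)) := fun S hS hSk => by
  simp only [pminor_mul_diagonal, pminor_diagonal_mul, h S hS hSk, Pi.mul_apply,
    Finset.prod_mul_distrib]
  ring

theorem transpose_diagonal_mul_mul_diagonal [Fintype m] (B : Matrix m m R) (d e : m → R) :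
    (diagonal d * B * diagonal e)ᵀ = diagonal e * Bᵀ * diagonal d := by
  simp [transpose_mul, Matrix.mul_assoc]

theorem pminor_transpose (M : Matrix m m R) (S : Finset m) : pminor Mᵀ S = pminor M S :=
  det_transpose (subm M S S)

theorem pminor_image_eq_det_submatrix {k : ℕ} (M : Matrix m m R) {v : Fin k → m}
    (hv : Function.Injective v) : pminor M (Finset.univ.image v) = (M.submatrix v v).det := by
  let e : Fin k ≃ Finset.univ.image v :=
    Equiv.ofBijective (fun p => ⟨v p, Finset.mem_image_of_mem v (Finset.mem_univ p)⟩)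
      ⟨fun p q h => hv (congrArg Subtype.val h), fun ⟨x, hx⟩ => by
        obtain ⟨p, -, rfl⟩ := Finset.mem_image.mp hx
        exact ⟨p, rfl⟩⟩
  rw [pminor, ← det_submatrix_equiv_self e]
  rfl

theorem pminor_pair_s8 (M : Matrix m m R) {i j : m} (hij : i ≠ j) :
    pminor M {i, j} = M i i * M j j - M i j * M j i := by
  have hv : Function.Injective ![i, j] := by
    intro p q
    fin_cases p <;> fin_cases q <;> simp [hij, hij.symm]
  have : ({i, j} : Finset m) = Finset.univ.image ![i, j] := by
    ext; simp [Fin.exists_fin_two, eq_comm]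
  rw [this, pminor_image_eq_det_submatrix M hv, det_fin_two]
  rfl

theorem pminor_eq_det_submatrix_vec_four (M : Matrix m m R) {i j k l : m}
    (hv : Function.Injective ![i, j, k, l]) :
    pminor M {i, j, k, l} = (M.submatrix ![i, j, k, l] ![i, j, k, l]).det := by
  have : ({i, j, k, l} : Finset m) = Finset.univ.image ![i, j, k, l] := by
    ext; simp [Fin.exists_fin_succ, eq_comm]
  rw [this, pminor_image_eq_det_submatrix M hv]

end General

section Field

variable {m : Type*} [Field K]

theorem diagSim_subm {A B : Matrix m m K} (h : DiagSim A B) (S : Finset m) :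
    DiagSim (subm A S S) (subm B S S) := by
  obtain ⟨D, hD, hAB⟩ := h
  exact ⟨fun p => D p, fun p => hD p, fun p q => hAB p q⟩

theorem exists_diag_of_diagSim_subm {A B : Matrix m m K} {S : Finset m}
    (h : DiagSim (subm A S S) (subm B S S)) :
    ∃ d : m → K, (∀ p, d p ≠ 0) ∧ ∀ p ∈ S, ∀ q ∈ S, d p * B p q = A p q * d q := by
  classical
  obtain ⟨D, hD, hAB⟩ := h
  refine ⟨fun p => if hp : p ∈ S then D ⟨p, hp⟩ else 1, fun p => ?_, fun p hp q hq => ?_⟩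
  · dsimp only
    split_ifs <;> simp [hD]
  · have := hAB ⟨p, hp⟩ ⟨q, hq⟩
    simp only [subm, of_apply] at this
    simp only [dif_pos hp, dif_pos hq, this]
    field_simp [hD ⟨p, hp⟩]

theorem exists_diag_off_pair {A B : Matrix m m K} (hA : ∀ p q, p ≠ q → A p q ≠ 0)
    {i j r : m} (hij : i ≠ j) (hri : r ≠ i) (hrj : r ≠ j) {d₁ d₂ : m → K}
    (hd₁ : ∀ p, d₁ p ≠ 0) (hd₂ : ∀ p, d₂ p ≠ 0)
    (h₁ : ∀ p q, p ≠ i → q ≠ i → d₁ p * B p q = A p q * d₁ q)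
    (h₂ : ∀ p q, p ≠ j → q ≠ j → d₂ p * B p q = A p q * d₂ q) :
    ∃ d : m → K, (∀ p, d p ≠ 0) ∧ ∀ p q, s(p, q) ≠ s(i, j) → d p * B p q = A p q * d q := by
  classical
  set c := d₂ r / d₁ r
  have hc : c ≠ 0 := div_ne_zero (hd₂ r) (hd₁ r)
  have hd₂c : ∀ p, p ≠ i → p ≠ j → d₂ p = c * d₁ p := by
    intro p hpi hpj
    rcases eq_or_ne p r with rfl | hpr
    · simp [c, hd₁ p]
    · have e₁ := h₁ p r hpi hri
      have e₂ := h₂ p r hpj hrj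
      have : A p r * (d₂ p * d₁ r - d₁ p * d₂ r) = 0 := by
        linear_combination d₁ p * e₂ - d₂ p * e₁
      have : d₂ p * d₁ r = d₁ p * d₂ r := by simpa [sub_eq_zero, hA p r hpr] using this
      rw [div_mul_eq_mul_div, eq_div_iff (hd₁ r)]
      linear_combination this
  set d := Function.update d₁ i (c⁻¹ * d₂ i)
  have hdi : ∀ p, p ≠ i → d p = d₁ p := fun p hp => Function.update_of_ne hp _ _
  have hdj : ∀ p, p ≠ j → d p = c⁻¹ * d₂ p := by
    intro p hpj
    rcases eq_or_ne p i with rfl | hpi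
    · exact Function.update_self ..
    · rw [hdi p hpi, hd₂c p hpi hpj, inv_mul_cancel_left₀ hc]
  refine ⟨d, fun p => ?_, fun p q hpq => ?_⟩
  · rcases eq_or_ne p i with rfl | hpi
    · simp [d, hc, hd₂]
    · simp [hdi p hpi, hd₁]
  · by_cases hpqi : p = i ∨ q = i
    · have hpj : p ≠ j := by rintro rfl; rcases hpqi with rfl | rfl <;> simp_all
      have hqj : q ≠ j := by rintro rfl; rcases hpqi with rfl | rfl <;> simp_all
      rw [hdj p hpj, hdj q hqj]
      linear_combination c⁻¹ * h₂ p q hpj hqj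
    · push Not at hpqi
      rw [hdi p hpqi.1, hdi q hpqi.2]
      exact h₁ p q hpqi.1 hpqi.2

theorem diagSim_of_diagonal_mul_mul_diagonal_eq [Fintype m] [DecidableEq m] {A B : Matrix m m K}
    {d e : m → K} (hd : ∀ p, d p ≠ 0) (he : ∀ p, e p ≠ 0)
    (h : diagonal d * B * diagonal e = A * diagonal (d * e)) : DiagSim A B := by
  refine ⟨d, hd, fun p q => ?_⟩
  have := congrFun₂ h p q
  simp only [mul_diagonal, diagonal_mul, Pi.mul_apply] at this
  field_simp [hd p]
  exact mul_right_cancel₀ (he q) (by linear_combination this)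

theorem one_le_rank_of_apply_ne_zero {r s : Type*} [Fintype s] {M : Matrix r s K} {p : r} {q : s}
    (h : M p q ≠ 0) : 1 ≤ M.rank := by
  have := rank_submatrix_le M (fun _ : Unit => p) (fun _ : Unit => q)
  rwa [rank_of_det_ne_zero (by simpa using h), Fintype.card_unit] at this

theorem rank_subm_mul_diagonal [Fintype m] [DecidableEq m] (A : Matrix m m K) {g : m → K}
    (hg : ∀ p, g p ≠ 0) (S T : Finset m) :
    (subm (A * diagonal g) S T).rank = (subm A S T).rank := by
  rw [subm_mul_diagonal]
  exact rank_mul_eq_left_of_isUnit_det _ _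
    (by simp [isUnit_iff_ne_zero, Finset.prod_ne_zero_iff, hg])

theorem rank_subm_pair_eq_one [DecidableEq m] (A : Matrix m m K) {i j k l : m} (hik : A i k ≠ 0)
    (hcross : A i k * A j l = A i l * A j k) : (subm A {i, j} {k, l}).rank = 1 := by
  refine le_antisymm ?_ (one_le_rank_of_apply_ne_zero (p := ⟨i, by simp⟩) (q := ⟨k, by simp⟩) hik)
  have : subm A {i, j} {k, l} =
      vecMulVec (fun p : ({i, j} : Finset m) => A p k)
        (fun q : ({k, l} : Finset m) => A i q / A i k) := by
    ext ⟨p, hp⟩ ⟨q, hq⟩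
    simp only [Finset.mem_insert, Finset.mem_singleton] at hp hq
    simp only [subm, of_apply, vecMulVec_apply]
    rcases hp with rfl | rfl <;> rcases hq with rfl | rfl <;> field_simp
    linear_combination hcross
  rw [this]
  exact rank_vecMulVec_le _ _

theorem isCut_of_rank_le_one [Fintype m] [DecidableEq m] {A : Matrix m m K} {X : Finset m}
    {i j k l : m} (hij : i ≠ j) (hkl : k ≠ l) (hi : i ∈ X) (hj : j ∈ X) (hk : k ∉ X) (hl : l ∉ X)
    (h₁ : (subm A X Xᶜ).rank ≤ 1) (h₂ : (subm A Xᶜ X).rank ≤ 1) : IsCut A X := by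
  have hX : 2 ≤ X.card := by
    simpa [hij] using Finset.card_le_card (s := {i, j}) (by simp [Finset.insert_subset_iff, hi, hj])
  have hXc : 2 ≤ Xᶜ.card := by
    simpa [hkl] using Finset.card_le_card (s := {k, l}) (by simp [Finset.insert_subset_iff, hk, hl])
  refine ⟨Finset.subset_univ X, hX, ?_, ?_, ?_⟩
  · rw [Finset.card_univ, ← Finset.card_compl_add_card X]
    omega
  all_goals rwa [← Finset.compl_eq_univ_sdiff]

end Field

section Pairs

variable {m : Type*}

theorem mk_ne_mk_of_not {P : m → Prop} {p q i j : m} (hp : ¬P p) (hi : P i) (hj : P j) :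
    s(p, q) ≠ s(i, j) := by
  intro h
  rcases Sym2.eq_iff.1 h with ⟨rfl, -⟩ | ⟨rfl, -⟩ <;> contradiction

theorem eq_of_agree_off_pair {M N : Matrix m m K} {i j : m}
    (hP : ∀ p q, s(p, q) ≠ s(i, j) → M p q = N p q) (hij : M i j = N i j)
    (hji : M j i = N j i) : M = N := by
  ext p q
  by_cases h : s(p, q) = s(i, j)
  · rcases Sym2.eq_iff.1 h with ⟨rfl, rfl⟩ | ⟨rfl, rfl⟩ <;> assumption
  · exact hP p q h

theorem injective_vec_four {i j k l : m} (hij : i ≠ j) (hik : i ≠ k) (hil : i ≠ l) (hjk : j ≠ k)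
    (hjl : j ≠ l) (hkl : k ≠ l) : Function.Injective ![i, j, k, l] := by
  intro p q
  fin_cases p <;> fin_cases q <;> simp [*, Ne.symm]

theorem subm_compl_eq_transpose_of_agree_off_pairs [DecidableEq m] [Fintype m]
    {M N : Matrix m m K} {i j k l : m} {X : Finset m}
    (hP : ∀ p q, s(p, q) ≠ s(i, j) → M p q = N p q)
    (hQ : ∀ p q, s(p, q) ≠ s(k, l) → M q p = N p q)
    (hi : i ∈ X) (hj : j ∈ X) (hk : k ∉ X) (hl : l ∉ X) : subm N Xᶜ X = (subm N X Xᶜ)ᵀ := by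
  ext ⟨q, hq⟩ ⟨p, hp⟩
  rw [Finset.mem_compl] at hq
  exact (hP q p (mk_ne_mk_of_not (P := (· ∈ X)) hq hi hj)).symm.trans
    (hQ p q (mk_ne_mk_of_not (P := (· ∉ X)) (not_not.2 hp) hk hl))

variable [Field K]

theorem swap_of_agree_off_pair [DecidableEq m] {M N : Matrix m m K} {i j : m} {Q : Sym2 m}
    (hij : i ≠ j) (hQ' : s(i, j) ≠ Q)
    (hP : ∀ p q, s(p, q) ≠ s(i, j) → M p q = N p q)
    (hQ : ∀ p q, s(p, q) ≠ Q → M q p = N p q) (hN : N j i ≠ 0)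
    (h2 : pminor M {i, j} = pminor N {i, j}) : M i j = N j i ∧ M j i = N i j := by
  have hMij : M i j = N j i := hQ j i (by rwa [Sym2.eq_swap])
  refine ⟨hMij, mul_left_cancel₀ hN ?_⟩
  rw [pminor_pair_s8 M hij, pminor_pair_s8 N hij, hMij, hP i i (by simp [hij]),
    hP j j (by simp [hij.symm])] at h2
  linear_combination -h2

theorem det_sub_det_of_swap_pair (M N : Matrix (Fin 4) (Fin 4) K)
    (hP : ∀ p q, s(p, q) ≠ s(0, 1) → M p q = N p q)
    (hQ : ∀ p q, s(p, q) ≠ s(2, 3) → M q p = N p q)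
    (h01 : M 0 1 = N 1 0) (h10 : M 1 0 = N 0 1) :
    N.det - M.det = (N 0 1 - N 1 0) * (N 2 3 - N 3 2) * (N 0 2 * N 1 3 - N 0 3 * N 1 2) := by
  have hN : N = !![N 0 0, N 0 1, N 0 2, N 0 3; N 1 0, N 1 1, N 1 2, N 1 3;
      N 0 2, N 1 2, N 2 2, N 2 3; N 0 3, N 1 3, N 3 2, N 3 3] := by
    ext p q
    fin_cases p <;> fin_cases q <;>
      first | rfl | exact (hP _ _ (by decide)).symm.trans (hQ _ _ (by decide))
  have hM : M = !![N 0 0, N 1 0, N 0 2, N 0 3; N 0 1, N 1 1, N 1 2, N 1 3;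
      N 0 2, N 1 2, N 2 2, N 2 3; N 0 3, N 1 3, N 3 2, N 3 3] := by
    ext p q
    fin_cases p <;> fin_cases q <;>
      first | exact h01 | exact h10 | exact hP _ _ (by decide) | exact hQ _ _ (by decide)
  rw [hM, hN]
  simp [det_succ_row_zero, Fin.sum_univ_succ, Fin.succAbove]
  ring

theorem mul_cross_eq_of_agree_off_pairs [DecidableEq m] {M N : Matrix m m K} {i j k l : m}
    (hij : i ≠ j) (hik : i ≠ k) (hil : i ≠ l) (hjk : j ≠ k) (hjl : j ≠ l) (hkl : k ≠ l)
    (hP : ∀ p q, s(p, q) ≠ s(i, j) → M p q = N p q)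
    (hQ : ∀ p q, s(p, q) ≠ s(k, l) → M q p = N p q)
    (hN : ∀ p q, p ≠ q → N p q ≠ 0) (hpm : PMEupto 4 M N) (hMN : M ≠ N) (hMN' : Mᵀ ≠ N) :
    N i k * N j l = N i l * N j k := by
  have hPQ : s(i, j) ≠ s(k, l) := by simp [hik, hil]
  obtain ⟨hMij, hMji⟩ := swap_of_agree_off_pair hij hPQ hP hQ (hN j i hij.symm)
    (hpm _ (by simp) (Finset.card_le_two.trans (by norm_num)))
  obtain ⟨hMkl, hMlk⟩ := swap_of_agree_off_pair (M := Mᵀ) hkl hPQ.symm hQ hP (hN l k hkl.symm)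
    (by rw [pminor_transpose]; exact hpm _ (by simp) (Finset.card_le_two.trans (by norm_num)))
  have hNij : N i j - N j i ≠ 0 := fun h =>
    hMN (eq_of_agree_off_pair hP (by linear_combination hMij - h) (by linear_combination hMji + h))
  have hNkl : N k l - N l k ≠ 0 := fun h =>
    hMN' (eq_of_agree_off_pair hQ (by linear_combination hMkl - h) (by linear_combination hMlk + h))
  set v := ![i, j, k, l]
  have hv : Function.Injective v := injective_vec_four hij hik hil hjk hjl hkl
  have hmap : ∀ p q p' q' : Fin 4, s(v p, v q) = s(v p', v q') → s(p, q) = s(p', q') :=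
    fun p q p' q' h => Sym2.map.injective hv (by simpa using h)
  have hdet := det_sub_det_of_swap_pair (M.submatrix v v) (N.submatrix v v)
    (fun p q h => hP _ _ fun h' => h (hmap p q 0 1 h'))
    (fun p q h => hQ _ _ fun h' => h (hmap p q 2 3 h')) hMij hMji
  rw [← pminor_eq_det_submatrix_vec_four M hv, ← pminor_eq_det_submatrix_vec_four N hv,
    hpm _ (by simp) Finset.card_le_four, sub_self] at hdet
  have : (N i j - N j i) * (N k l - N l k) * (N i k * N j l - N i l * N j k) = 0 := hdet.symm
  simpa [hNij, hNkl, sub_eq_zero] using this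

end Pairs

theorem exists_diagonal_agree_off_pair {n : ℕ} [Field K] {A B : Matrix (Fin n) (Fin n) K}
    (hA : ∀ p q, p ≠ q → A p q ≠ 0) {i j r : Fin n} (hi : i ∈ D1 A B) (hj : j ∈ D1 A B)
    (hr : r ∉ D1 A B) (hij : i ≠ j) :
    ∃ d : Fin n → K, (∀ p, d p ≠ 0) ∧ ∀ e : Fin n → K, (∀ p, e p ≠ 0) →
      (∀ p q, s(p, q) ≠ s(i, j) →
        (diagonal d * B * diagonal e) p q = (A * diagonal (d * e)) p q) ∧
      diagonal d * B * diagonal e ≠ A * diagonal (d * e) := by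
  obtain ⟨d₁, hd₁, h₁⟩ := exists_diag_of_diagSim_subm hi
  obtain ⟨d₂, hd₂, h₂⟩ := exists_diag_of_diagSim_subm hj
  obtain ⟨d, hd0, hd⟩ := exists_diag_off_pair hA hij (ne_of_mem_of_not_mem hi hr).symm
    (ne_of_mem_of_not_mem hj hr).symm
    hd₁ hd₂ (fun p q hp hq => h₁ p (by simpa using hp) q (by simpa using hq))
    (fun p q hp hq => h₂ p (by simpa using hp) q (by simpa using hq))
  refine ⟨d, hd0, fun e he0 => ⟨fun p q h => ?_, fun h => hr ?_⟩⟩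
  · simp only [mul_diagonal, diagonal_mul, Pi.mul_apply]
    linear_combination e q * hd p q h
  · exact diagSim_subm (diagSim_of_diagonal_mul_mul_diagonal_eq hd0 he0 h) _

theorem cut_of_d1_pair_d2_pair_general {n : ℕ} {K : Type*} [Field K]
    (A B : Matrix (Fin n) (Fin n) K) (hA : PropR A) (h4 : PMEupto 4 A B)
    (i₁ i₂ i₃ i₄ : Fin n)
    (h12 : i₁ ≠ i₂) (h13 : i₁ ≠ i₃) (h14 : i₁ ≠ i₄)
    (h23 : i₂ ≠ i₃) (h24 : i₂ ≠ i₄) (h34 : i₃ ≠ i₄)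
    (hD1 : D1 A B = {i₁, i₂}) (hD2 : D2 A B = {i₃, i₄}) :
    ∃ X : Finset (Fin n), i₁ ∈ X ∧ i₂ ∈ X ∧ i₃ ∉ X ∧ i₄ ∉ X ∧ IsCut A X := by
  obtain ⟨hA0, hR⟩ := hA
  have hD2' : D1 A Bᵀ = {i₃, i₄} := hD2
  obtain ⟨d, hd0, hd⟩ := exists_diagonal_agree_off_pair (B := B) (r := i₃) hA0 (by simp [hD1])
    (by simp [hD1]) (by simp [hD1, h13.symm, h23.symm]) h12
  obtain ⟨e, he0, he⟩ := exists_diagonal_agree_off_pair (B := Bᵀ) (r := i₁) hA0 (by simp [hD2'])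
    (by simp [hD2']) (by simp [hD2', h13, h14]) h34
  obtain ⟨hP, hMN⟩ := hd e he0
  obtain ⟨hQ, hMN'⟩ := he d hd0
  rw [← transpose_diagonal_mul_mul_diagonal, mul_comm e d] at hQ hMN'
  have hg : ∀ p, (d * e) p ≠ 0 := fun p => mul_ne_zero (hd0 p) (he0 p)
  have hN : ∀ p q, p ≠ q → (A * diagonal (d * e)) p q ≠ 0 := fun p q hpq => by
    simpa [mul_diagonal] using mul_ne_zero (hA0 p q hpq) (hg q)
  have hcross := mul_cross_eq_of_agree_off_pairs h12 h13 h14 h23 h24 h34 hP hQ hN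
    (pmeUpto_diagonal_mul_mul_diagonal h4 d e) hMN hMN'
  obtain ⟨X, h1X, h2X, h3X, h4X, hX⟩ := hR i₁ i₂ i₃ i₄ h12 h13 h14 h23 h24 h34 (by
    rw [← rank_subm_mul_diagonal A hg]
    exact rank_subm_pair_eq_one _ (hN _ _ h13) hcross)
  refine ⟨X, h1X, h2X, h3X, h4X, isCut_of_rank_le_one h12 h34 h1X h2X h3X h4X hX.le ?_⟩
  rw [← rank_subm_mul_diagonal A hg,
    subm_compl_eq_transpose_of_agree_off_pairs hP hQ h1X h2X h3X h4X, rank_transpose,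
    rank_subm_mul_diagonal A hg, hX]

/-- If `A` satisfies property `R`, `A ≡PME≤4 B`,
`D₁(A,B) = {i₁,i₂}` and `D₂(A,B) = {i₃,i₄}`, then `A` has a cut separating
`{i₁,i₂}` from `{i₃,i₄}`. -/
theorem cut_of_d1_pair_d2_pair {n : ℕ} (hn : 4 ≤ n) {K : Type*} [Field K]
    (A B : Matrix (Fin n) (Fin n) K) (hA : PropR A) (h4 : PMEupto 4 A B)
    (i₁ i₂ i₃ i₄ : Fin n)
    (h12 : i₁ ≠ i₂) (h13 : i₁ ≠ i₃) (h14 : i₁ ≠ i₄)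
    (h23 : i₂ ≠ i₃) (h24 : i₂ ≠ i₄) (h34 : i₃ ≠ i₄)
    (hD1 : D1 A B = {i₁, i₂}) (hD2 : D2 A B = {i₃, i₄}) :
    ∃ X : Finset (Fin n), i₁ ∈ X ∧ i₂ ∈ X ∧ i₃ ∉ X ∧ i₄ ∉ X ∧ IsCut A X :=
  cut_of_d1_pair_d2_pair_general A B hA h4 i₁ i₂ i₃ i₄ h12 h13 h14 h23 h24 h34 hD1 hD2

end PMAP
end

section
/- (Decomposition lemma) Let A, B ∈ 𝔽^{n×n} have all off-diagonal entries nonzero, and let S ⊆ [n] be a cut of both A and B. Fix any s ∈ S and t ∈ S̄. Then A ≡PME B if and only if A[S ∪ {t}] ≡PME B[S ∪ {t}] and A[S̄ ∪ {s}] ≡PME B[S̄ ∪ {s}]. -/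
namespace PMAP

open Matrix

variable {K : Type*}

private lemma detBlocks_isUnit {L : Type*} [CommRing L] {p q : Type*}
    [Fintype p] [Fintype q] [DecidableEq p] [DecidableEq q]
    (X : Matrix p p L) (Y : Matrix q q L) (a d : p → L) (b c : q → L)
    (hX : IsUnit X.det) (hY : IsUnit Y.det) :
    (fromBlocks X (vecMulVec a b) (vecMulVec c d) Y).det
      = X.det * Y.det - (d ⬝ᵥ X.adjugate *ᵥ a) * (b ⬝ᵥ Y.adjugate *ᵥ c) := by
  haveI := X.invertibleOfIsUnitDet hX
  rw [det_fromBlocks₁₁]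
  set κ := d ⬝ᵥ (⅟X : Matrix p p L) *ᵥ a with hκ
  set β := b ⬝ᵥ Y⁻¹ *ᵥ c with hβ
  have key : ∀ i j, (vecMulVec c d * ⅟X * vecMulVec a b) i j = κ * (c i * b j) := by
    intro i j
    simp only [mul_apply, vecMulVec_apply, hκ, dotProduct, mulVec, Finset.sum_mul,
      Finset.mul_sum]
    rw [Finset.sum_comm]
    exact Finset.sum_congr rfl fun k _ => Finset.sum_congr rfl fun l _ => by ring
  have h2 : Y - vecMulVec c d * ⅟X * vecMulVec a b
      = Y + Matrix.replicateCol Unit (fun i => -(κ * c i)) * Matrix.replicateRow Unit b := by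
    ext i j
    rw [Matrix.sub_apply, Matrix.add_apply, key i j, Matrix.mul_apply]
    simp [Matrix.replicateCol, Matrix.replicateRow]
    ring
  rw [h2, det_add_mul _ _ hY]
  have h3 : (1 + Matrix.replicateRow Unit b * Y⁻¹ * Matrix.replicateCol Unit (fun i => -(κ * c i)))
      = Matrix.of fun (_ _ : Unit) => 1 - κ * β := by
    ext i j
    simp only [Matrix.add_apply, Matrix.one_apply_eq, Matrix.mul_apply, Matrix.replicateRow_apply,
      Matrix.replicateCol_apply, Matrix.of_apply, hβ, dotProduct, mulVec, Finset.sum_mul,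
      Finset.mul_sum]
    rw [Finset.sum_comm]
    rw [sub_eq_add_neg, ← Finset.sum_neg_distrib]
    congr 1
    exact Finset.sum_congr rfl fun k _ => by rw [← Finset.sum_neg_distrib]; exact Finset.sum_congr rfl fun l _ => by ring
  have h4 : (Matrix.of fun (_ _ : Unit) => 1 - κ * β).det = 1 - κ * β := by
    rw [det_unique]; rfl
  rw [h3, h4]
  have hA' : X.det * κ = d ⬝ᵥ X.adjugate *ᵥ a := by
    rw [hκ, invOf_eq_nonsing_inv, Matrix.inv_def, Matrix.smul_mulVec, dotProduct_smul,
      smul_eq_mul, ← mul_assoc, Ring.mul_inverse_cancel _ hX, one_mul]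
  have hB' : Y.det * β = b ⬝ᵥ Y.adjugate *ᵥ c := by
    rw [hβ, Matrix.inv_def, Matrix.smul_mulVec, dotProduct_smul,
      smul_eq_mul, ← mul_assoc, Ring.mul_inverse_cancel _ hY, one_mul]
  linear_combination (-(Y.det * β)) * hA' + (-(d ⬝ᵥ X.adjugate *ᵥ a)) * hB'

private lemma map_vecMulVec {R S : Type*} [CommRing R] [CommRing S] (f : R →+* S)
    {p q : Type*} (u : p → R) (v : q → R) :
    (vecMulVec u v).map f = vecMulVec (f ∘ u) (f ∘ v) := by
  ext i j; simp [vecMulVec_apply]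

private lemma map_dotAdj {R S : Type*} [CommRing R] [CommRing S] (f : R →+* S)
    {p : Type*} [Fintype p] [DecidableEq p] (v u : p → R) (M : Matrix p p R) :
    f (v ⬝ᵥ M.adjugate *ᵥ u) = (f ∘ v) ⬝ᵥ (M.map f).adjugate *ᵥ (f ∘ u) := by
  have h := f.map_adjugate M
  rw [RingHom.mapMatrix_apply, RingHom.mapMatrix_apply] at h
  rw [← h]
  simp [dotProduct, mulVec, map_sum, _root_.map_mul, Matrix.map_apply]

private lemma map_blocks_det {R S : Type*} [CommRing R] [CommRing S] (f : R →+* S)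
    {p q : Type*} [Fintype p] [Fintype q] [DecidableEq p] [DecidableEq q]
    (X : Matrix p p R) (Y : Matrix q q R) (a d : p → R) (b c : q → R) :
    (fromBlocks (X.map f) (vecMulVec (f ∘ a) (f ∘ b)) (vecMulVec (f ∘ c) (f ∘ d))
        (Y.map f)).det
      = f ((fromBlocks X (vecMulVec a b) (vecMulVec c d) Y).det) := by
  rw [f.map_det, RingHom.mapMatrix_apply, fromBlocks_map, map_vecMulVec, map_vecMulVec]

private lemma map_rhs_det {R S : Type*} [CommRing R] [CommRing S] (f : R →+* S)
    {p q : Type*} [Fintype p] [Fintype q] [DecidableEq p] [DecidableEq q]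
    (X : Matrix p p R) (Y : Matrix q q R) (a d : p → R) (b c : q → R) :
    (X.map f).det * (Y.map f).det
        - ((f ∘ d) ⬝ᵥ (X.map f).adjugate *ᵥ (f ∘ a)) * ((f ∘ b) ⬝ᵥ (Y.map f).adjugate *ᵥ (f ∘ c))
      = f (X.det * Y.det - (d ⬝ᵥ X.adjugate *ᵥ a) * (b ⬝ᵥ Y.adjugate *ᵥ c)) := by
  rw [_root_.map_sub, _root_.map_mul, _root_.map_mul, map_dotAdj, map_dotAdj, f.map_det, f.map_det,
    RingHom.mapMatrix_apply, RingHom.mapMatrix_apply]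

open Polynomial in
private lemma det_perturb_ne_zero {p : Type*} [Fintype p] [DecidableEq p]
    {L : Type*} [Field L] (M : Matrix p p L) :
    ((Polynomial.X : L[X]) • (1 : Matrix p p L[X]) + M.map Polynomial.C).det ≠ 0 := by
  have h : (Polynomial.X : L[X]) • (1 : Matrix p p L[X]) + M.map Polynomial.C
      = charmatrix (-M) := by
    ext i j
    by_cases hij : i = j
    · subst hij
      rw [charmatrix_apply_eq]
      simp [Matrix.one_apply_eq, sub_neg_eq_add]
    · rw [charmatrix_apply_ne _ _ _ hij]
      simp [Matrix.one_apply_ne hij]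
  rw [h]
  exact (charpoly_monic (-M)).ne_zero

open Polynomial in
private lemma detBlocks {L : Type*} [Field L] {p q : Type*}
    [Fintype p] [Fintype q] [DecidableEq p] [DecidableEq q]
    (X : Matrix p p L) (Y : Matrix q q L) (a d : p → L) (b c : q → L) :
    (fromBlocks X (vecMulVec a b) (vecMulVec c d) Y).det
      = X.det * Y.det - (d ⬝ᵥ X.adjugate *ᵥ a) * (b ⬝ᵥ Y.adjugate *ᵥ c) := by
  classical
  set X' : Matrix p p L[X] := (Polynomial.X : L[X]) • 1 + X.map Polynomial.C with hX'def
  set Y' : Matrix q q L[X] := (Polynomial.X : L[X]) • 1 + Y.map Polynomial.C with hY'def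
  set a' : p → L[X] := Polynomial.C ∘ a
  set d' : p → L[X] := Polynomial.C ∘ d
  set b' : q → L[X] := Polynomial.C ∘ b
  set c' : q → L[X] := Polynomial.C ∘ c
  set φ : L[X] →+* RatFunc L := (algebraMap L[X] (RatFunc L)) with hφdef
  have hφ : Function.Injective φ := RatFunc.algebraMap_injective L
  have hXu : IsUnit ((X'.map φ).det) := by
    rw [← RingHom.mapMatrix_apply, ← φ.map_det]
    exact (map_ne_zero_iff φ hφ).mpr (det_perturb_ne_zero X) |> isUnit_iff_ne_zero.mpr
  have hYu : IsUnit ((Y'.map φ).det) := by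
    rw [← RingHom.mapMatrix_apply, ← φ.map_det]
    exact (map_ne_zero_iff φ hφ).mpr (det_perturb_ne_zero Y) |> isUnit_iff_ne_zero.mpr
  have key := detBlocks_isUnit (X'.map φ) (Y'.map φ) (φ ∘ a') (φ ∘ d') (φ ∘ b') (φ ∘ c') hXu hYu
  rw [map_blocks_det φ, map_rhs_det φ] at key
  have hR := hφ key
  have key2 := congrArg (Polynomial.evalRingHom (0 : L)) hR
  rw [← map_blocks_det (Polynomial.evalRingHom (0 : L)),
    ← map_rhs_det (Polynomial.evalRingHom (0 : L))] at key2
  have eX : X'.map (Polynomial.evalRingHom (0 : L)) = X := by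
    ext i j
    simp [hX'def, Matrix.map_apply, Matrix.add_apply, Matrix.smul_apply, Matrix.one_apply,
      apply_ite, smul_eq_mul]
  have eY : Y'.map (Polynomial.evalRingHom (0 : L)) = Y := by
    ext i j
    simp [hY'def, Matrix.map_apply, Matrix.add_apply, Matrix.smul_apply, Matrix.one_apply,
      apply_ite, smul_eq_mul]
  have ea : (Polynomial.evalRingHom (0 : L)) ∘ a' = a := by funext i; simp [a']
  have eb : (Polynomial.evalRingHom (0 : L)) ∘ b' = b := by funext i; simp [b']
  have ec : (Polynomial.evalRingHom (0 : L)) ∘ c' = c := by funext i; simp [c']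
  have ed : (Polynomial.evalRingHom (0 : L)) ∘ d' = d := by funext i; simp [d']
  rwa [eX, eY, ea, eb, ec, ed] at key2

private lemma rank_le_one_factor {L : Type*} [Field L] {m' n' : Type*} [Fintype n'] [DecidableEq n']
    (M : Matrix m' n' L) (h : M.rank ≤ 1) :
    ∃ (u : m' → L) (w : n' → L), ∀ i j, M i j = u i * w j := by
  have h' : Module.finrank L ↥(LinearMap.range M.mulVecLin) ≤ 1 := h
  obtain ⟨v, hv⟩ := finrank_le_one_iff.mp h'
  have colmem : ∀ j, (fun i => M i j) ∈ LinearMap.range M.mulVecLin := by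
    intro j
    refine ⟨Pi.single j 1, ?_⟩
    funext i
    simp [Matrix.mulVecLin_apply, Matrix.mulVec_single]
  choose w hw using fun j => hv ⟨fun i => M i j, colmem j⟩
  refine ⟨fun i => (v : m' → L) i, w, fun i j => ?_⟩
  have := congrFun (congrArg Subtype.val (hw j)) i
  simpa [mul_comm] using this.symm

private def unionSumEquiv {m : Type*} [DecidableEq m] (P Q : Finset m) (h : Disjoint P Q) :
    ({x // x ∈ P} ⊕ {x // x ∈ Q}) ≃ {x // x ∈ P ∪ Q} where
  toFun := Sum.elim (fun i => ⟨i.1, Finset.mem_union_left _ i.2⟩)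
    (fun j => ⟨j.1, Finset.mem_union_right _ j.2⟩)
  invFun x := if hx : x.1 ∈ P then Sum.inl ⟨x.1, hx⟩ else
    Sum.inr ⟨x.1, (Finset.mem_union.mp x.2).resolve_left hx⟩
  left_inv := by
    rintro (i | j)
    · simp
    · have hj : j.1 ∉ P := Finset.disjoint_right.mp h j.2
      simp [hj]
  right_inv x := by
    by_cases hx : x.1 ∈ P <;> simp [hx]

private lemma pminor_union {n : ℕ} {L : Type*} [Field L] (A : Matrix (Fin n) (Fin n) L)
    (S : Finset (Fin n)) (a b c d : Fin n → L)
    (hab : ∀ i ∈ S, ∀ j ∉ S, A i j = a i * b j)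
    (hcd : ∀ i ∈ S, ∀ j ∉ S, A j i = c j * d i)
    (P Q : Finset (Fin n)) (hP : P ⊆ S) (hQ : ∀ j ∈ Q, j ∉ S) :
    pminor A (P ∪ Q) = pminor A P * pminor A Q -
      ((fun i : P => d i.1) ⬝ᵥ (subm A P P).adjugate *ᵥ (fun i : P => a i.1)) *
      ((fun j : Q => b j.1) ⬝ᵥ (subm A Q Q).adjugate *ᵥ (fun j : Q => c j.1)) := by
  have hdisj : Disjoint P Q := Finset.disjoint_left.mpr fun x hxP hxQ => hQ x hxQ (hP hxP)
  let e := unionSumEquiv P Q hdisj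
  have hsub : (subm A (P ∪ Q) (P ∪ Q)).submatrix e e
      = fromBlocks (subm A P P) (vecMulVec (fun i : P => a i.1) (fun j : Q => b j.1))
          (vecMulVec (fun j : Q => c j.1) (fun i : P => d i.1)) (subm A Q Q) := by
    ext x y
    rcases x with i | j <;> rcases y with i' | j'
    · rfl
    · exact hab i.1 (hP i.2) j'.1 (hQ _ j'.2)
    · exact hcd i'.1 (hP i'.2) j.1 (hQ _ j.2)
    · rfl
  have h0 : pminor A (P ∪ Q) = ((subm A (P ∪ Q) (P ∪ Q)).submatrix e e).det :=
    (det_submatrix_equiv_self e _).symm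
  rw [h0, hsub, detBlocks]
  rfl

private lemma pminor_singleton_s10 {m : Type*} [DecidableEq m] {L : Type*} [CommRing L]
    (A : Matrix m m L) (i : m) : pminor A {i} = A i i := by
  haveI : Unique {x // x ∈ ({i} : Finset m)} :=
    ⟨⟨⟨i, Finset.mem_singleton_self i⟩⟩, fun x => Subtype.ext (Finset.mem_singleton.mp x.2)⟩
  rw [pminor, det_unique]
  have hd : ((default : {x // x ∈ ({i} : Finset m)}) : m) = i :=
    Finset.mem_singleton.mp (Subtype.prop _)
  show A ((default : {x // x ∈ ({i} : Finset m)}) : m) ((default : {x // x ∈ ({i} : Finset m)}) : m) = A i i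
  rw [hd]

private lemma dot_adj_singleton {m : Type*} [DecidableEq m] {L : Type*} [CommRing L]
    (A : Matrix m m L) (t : m) (f g : m → L) :
    ((fun j : ({t} : Finset m) => f j.1) ⬝ᵥ (subm A {t} {t}).adjugate *ᵥ
      (fun j : ({t} : Finset m) => g j.1)) = f t * g t := by
  haveI : Unique {x // x ∈ ({t} : Finset m)} :=
    ⟨⟨⟨t, Finset.mem_singleton_self t⟩⟩, fun x => Subtype.ext (Finset.mem_singleton.mp x.2)⟩
  rw [adjugate_subsingleton, Matrix.one_mulVec]
  have hd : ((default : {x // x ∈ ({t} : Finset m)}) : m) = t :=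
    Finset.mem_singleton.mp (Subtype.prop _)
  simp [dotProduct, hd]
private def submEquiv {m : Type*} [DecidableEq m] (X : Finset m) (T : Finset {x // x ∈ X}) :
    {y // y ∈ T} ≃ {z // z ∈ T.map (Function.Embedding.subtype _)} where
  toFun y := ⟨y.1.1, Finset.mem_map_of_mem _ y.2⟩
  invFun z := ⟨⟨z.1, by
      obtain ⟨w, hw, hval⟩ := Finset.mem_map.mp z.2
      exact hval ▸ w.2⟩, by
      obtain ⟨w, hw, hval⟩ := Finset.mem_map.mp z.2
      have : (⟨z.1, by exact hval ▸ w.2⟩ : {x // x ∈ X}) = w :=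
        Subtype.ext (by simpa using hval.symm)
      exact (by rw [this]; exact hw)⟩
  left_inv y := Subtype.ext (Subtype.ext rfl)
  right_inv z := Subtype.ext rfl

private lemma pminor_subm {m : Type*} [DecidableEq m] {L : Type*} [CommRing L]
    (A : Matrix m m L) (X : Finset m) (T : Finset {x // x ∈ X}) :
    pminor (subm A X X) T = pminor A (T.map (Function.Embedding.subtype _)) := by
  have h : subm (subm A X X) T T
      = (subm A (T.map (Function.Embedding.subtype _)) (T.map (Function.Embedding.subtype _))).submatrix
          (submEquiv X T) (submEquiv X T) := rfl
  rw [pminor, h, det_submatrix_equiv_self]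
  rfl

private lemma pme_subm_iff {m : Type*} [DecidableEq m] {L : Type*} [CommRing L]
    (A B : Matrix m m L) (X : Finset m) :
    PME (subm A X X) (subm B X X) ↔
      ∀ T : Finset m, T ⊆ X → T.Nonempty → pminor A T = pminor B T := by
  classical
  constructor
  · intro h T hTX hT
    have h1 : (T.subtype (· ∈ X)).map (Function.Embedding.subtype _) = T :=
      Finset.subtype_map_of_mem fun x hx => hTX hx
    have h2 : (T.subtype (· ∈ X)).Nonempty := by
      obtain ⟨x, hx⟩ := hT
      exact ⟨⟨x, hTX hx⟩, Finset.mem_subtype.mpr hx⟩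
    have := h _ h2
    rwa [pminor_subm, pminor_subm, h1] at this
  · intro h T hT
    rw [pminor_subm, pminor_subm]
    refine h _ ?_ ((Finset.map_nonempty).mpr hT)
    intro x hx
    obtain ⟨w, _, hval⟩ := Finset.mem_map.mp hx
    have : w.1 = x := by simpa using hval
    exact this ▸ w.2

private lemma cut_factor {n : ℕ} {L : Type*} [Field L] (A : Matrix (Fin n) (Fin n) L)
    (S : Finset (Fin n))
    (h1 : (subm A S (Finset.univ \ S)).rank ≤ 1)
    (h2 : (subm A (Finset.univ \ S) S).rank ≤ 1) :
    ∃ a b c d : Fin n → L, (∀ i ∈ S, ∀ j ∉ S, A i j = a i * b j) ∧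
      (∀ i ∈ S, ∀ j ∉ S, A j i = c j * d i) := by
  obtain ⟨p, q, hpq⟩ := rank_le_one_factor _ h1
  obtain ⟨p', q', hpq'⟩ := rank_le_one_factor _ h2
  refine ⟨fun i => if h : i ∈ S then p ⟨i, h⟩ else 0,
          fun j => if h : j ∈ Finset.univ \ S then q ⟨j, h⟩ else 0,
          fun j => if h : j ∈ Finset.univ \ S then p' ⟨j, h⟩ else 0,
          fun i => if h : i ∈ S then q' ⟨i, h⟩ else 0, ?_, ?_⟩
  · intro i hi j hj
    have hj' : j ∈ Finset.univ \ S := Finset.mem_sdiff.mpr ⟨Finset.mem_univ _, hj⟩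
    simp only [dif_pos hi, dif_pos hj']
    exact hpq ⟨i, hi⟩ ⟨j, hj'⟩
  · intro i hi j hj
    have hj' : j ∈ Finset.univ \ S := Finset.mem_sdiff.mpr ⟨Finset.mem_univ _, hj⟩
    simp only [dif_pos hi, dif_pos hj']
    exact hpq' ⟨j, hj'⟩ ⟨i, hi⟩

private lemma kappa_formula {n : ℕ} {L : Type*} [Field L] (A : Matrix (Fin n) (Fin n) L)
    (S : Finset (Fin n)) (s t : Fin n) (hs : s ∈ S) (ht : t ∉ S)
    (a b c d : Fin n → L)
    (hab : ∀ i ∈ S, ∀ j ∉ S, A i j = a i * b j)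
    (hcd : ∀ i ∈ S, ∀ j ∉ S, A j i = c j * d i)
    (P Q : Finset (Fin n)) (hP : P ⊆ S) (hQ : ∀ j ∈ Q, j ∉ S) :
    (A s t * A t s) * pminor A (P ∪ Q)
      = (A s t * A t s) * (pminor A P * pminor A Q)
        - (pminor A P * A t t - pminor A (insert t P)) *
          (A s s * pminor A Q - pminor A (insert s Q)) := by
  have h0 := pminor_union A S a b c d hab hcd P Q hP hQ
  have e1 : pminor A (insert t P) = pminor A P * A t t -
      ((fun i : P => d i.1) ⬝ᵥ (subm A P P).adjugate *ᵥ (fun i : P => a i.1)) * (b t * c t) := by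
    have h1 := pminor_union A S a b c d hab hcd P {t} hP (by simpa using ht)
    rw [dot_adj_singleton, pminor_singleton_s10] at h1
    have hu : P ∪ {t} = insert t P := by
      rw [Finset.union_comm, ← Finset.insert_eq]
    rwa [hu] at h1
  have e2 : pminor A (insert s Q) = A s s * pminor A Q -
      (d s * a s) * ((fun j : Q => b j.1) ⬝ᵥ (subm A Q Q).adjugate *ᵥ (fun j : Q => c j.1)) := by
    have h2 := pminor_union A S a b c d hab hcd {s} Q (by simpa using hs) hQ
    rw [dot_adj_singleton, pminor_singleton_s10] at h2
    rwa [← Finset.insert_eq] at h2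
  rw [h0, e1, e2, hab s hs t ht, hcd s hs t ht]
  ring

/-- **Decomposition lemma.** For a common cut `S` of `A` and `B`,
`A ≡PME B` iff `A[S∪{t}] ≡PME B[S∪{t}]` and `A[S̄∪{s}] ≡PME B[S̄∪{s}]`. -/
theorem pme_iff_pme_of_common_cut {n : ℕ} {K : Type*} [Field K]
    (A B : Matrix (Fin n) (Fin n) K)
    (hA : ∀ i j : Fin n, i ≠ j → A i j ≠ 0)
    (hB : ∀ i j : Fin n, i ≠ j → B i j ≠ 0)
    (S : Finset (Fin n)) (hSA : IsCut A S) (hSB : IsCut B S)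
    (s t : Fin n) (hs : s ∈ S) (ht : t ∉ S) :
    PME A B ↔
      (PME (subm A (insert t S) (insert t S)) (subm B (insert t S) (insert t S)) ∧
       PME (subm A (insert s Sᶜ) (insert s Sᶜ)) (subm B (insert s Sᶜ) (insert s Sᶜ))) := by
  classical
  have hst : s ≠ t := fun h => ht (h ▸ hs)
  constructor
  · intro h
    constructor <;> · rw [pme_subm_iff]; intro T _ hTne; exact h T hTne
  · rintro ⟨h1, h2⟩
    rw [pme_subm_iff] at h1 h2
    obtain ⟨-, -, -, hrA1, hrA2⟩ := hSA
    obtain ⟨-, -, -, hrB1, hrB2⟩ := hSB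
    obtain ⟨a, b, c, d, hab, hcd⟩ := cut_factor A S hrA1 hrA2
    obtain ⟨a', b', c', d', hab', hcd'⟩ := cut_factor B S hrB1 hrB2
    intro T hTne
    set P := T ∩ S with hPdef
    set Q := T \ S with hQdef
    have hPS : P ⊆ S := Finset.inter_subset_right
    have hQS : ∀ j ∈ Q, j ∉ S := fun j hj => (Finset.mem_sdiff.mp hj).2
    have hunion : P ∪ Q = T := by
      rw [hPdef, hQdef, Finset.union_comm]
      exact Finset.sdiff_union_inter T S
    have hsubt : ∀ x ∈ S, x ∈ insert t S := fun x hx => Finset.mem_insert_of_mem hx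
    have hPins : P ⊆ insert t S := fun x hx => hsubt x (hPS hx)
    have hQins : Q ⊆ insert s Sᶜ := fun x hx =>
      Finset.mem_insert_of_mem (Finset.mem_compl.mpr (hQS x hx))
    have hPmatch : pminor A P = pminor B P := by
      rcases P.eq_empty_or_nonempty with hPe | hPne
      · haveI : IsEmpty {x // x ∈ (∅ : Finset (Fin n))} :=
          ⟨fun x => (Finset.notMem_empty _ x.2)⟩
        rw [hPe, pminor, pminor, det_isEmpty, det_isEmpty]
      · exact h1 P hPins hPne
    have hQmatch : pminor A Q = pminor B Q := by
      rcases Q.eq_empty_or_nonempty with hQe | hQne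
      · haveI : IsEmpty {x // x ∈ (∅ : Finset (Fin n))} :=
          ⟨fun x => (Finset.notMem_empty _ x.2)⟩
        rw [hQe, pminor, pminor, det_isEmpty, det_isEmpty]
      · exact h2 Q hQins hQne
    have htP : pminor A (insert t P) = pminor B (insert t P) := by
      refine h1 _ ?_ (Finset.insert_nonempty _ _)
      intro x hx
      rcases Finset.mem_insert.mp hx with rfl | hx
      · exact Finset.mem_insert_self _ _
      · exact hPins hx
    have hsQ : pminor A (insert s Q) = pminor B (insert s Q) := by
      refine h2 _ ?_ (Finset.insert_nonempty _ _)
      intro x hx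
      rcases Finset.mem_insert.mp hx with rfl | hx
      · exact Finset.mem_insert_self _ _
      · exact hQins hx
    have hss : A s s = B s s := by
      have := h1 {s} (by intro x hx; rw [Finset.mem_singleton.mp hx]; exact hsubt s hs)
        ⟨s, Finset.mem_singleton_self s⟩
      rwa [pminor_singleton_s10, pminor_singleton_s10] at this
    have htt : A t t = B t t := by
      have := h1 {t} (by intro x hx; rw [Finset.mem_singleton.mp hx]; exact Finset.mem_insert_self _ _)
        ⟨t, Finset.mem_singleton_self t⟩
      rwa [pminor_singleton_s10, pminor_singleton_s10] at this
    have hstpair : pminor A {s, t} = pminor B {s, t} := by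
      refine h1 _ ?_ ⟨s, Finset.mem_insert_self _ _⟩
      intro x hx
      rcases Finset.mem_insert.mp hx with rfl | hx
      · exact hsubt x hs
      · rw [Finset.mem_singleton.mp hx]; exact Finset.mem_insert_self _ _
    have pairA : pminor A {s, t} = A s s * A t t - A s t * A t s := by
      have h0 := pminor_union A S a b c d hab hcd {s} {t} (by simpa using hs) (by simpa using ht)
      rw [dot_adj_singleton, dot_adj_singleton, pminor_singleton_s10, pminor_singleton_s10,
        ← Finset.insert_eq] at h0
      rw [h0, hab s hs t ht, hcd s hs t ht]
      ring
    have pairB : pminor B {s, t} = B s s * B t t - B s t * B t s := by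
      have h0 := pminor_union B S a' b' c' d' hab' hcd' {s} {t} (by simpa using hs)
        (by simpa using ht)
      rw [dot_adj_singleton, dot_adj_singleton, pminor_singleton_s10, pminor_singleton_s10,
        ← Finset.insert_eq] at h0
      rw [h0, hab' s hs t ht, hcd' s hs t ht]
      ring
    have hκ : A s t * A t s = B s t * B t s := by
      have hpair := hstpair
      rw [pairA, pairB] at hpair
      linear_combination A t t * hss + B s s * htt - hpair
    have hκ0 : A s t * A t s ≠ 0 := mul_ne_zero (hA s t hst) (hA t s (Ne.symm hst))
    have kA := kappa_formula A S s t hs ht a b c d hab hcd P Q hPS hQS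
    have kB := kappa_formula B S s t hs ht a' b' c' d' hab' hcd' P Q hPS hQS
    rw [hunion] at kA kB
    apply mul_left_cancel₀ hκ0
    rw [kA, hPmatch, hQmatch, htP, hsQ, hss, htt, hκ, kB]

end PMAP
end

section
/- Let A ∈ 𝔽^{n×n}, let D ∈ 𝔽^{n×n} be a diagonal matrix such that A + D is invertible, and let C ∈ 𝔽^{n×n} satisfy C ≡PME (A + D)⁻¹. Then C is invertible and C⁻¹ − D ≡PME A. -/
namespace PMAP

open Matrix

variable {K : Type*}

lemma det_eq_det_subm_of_rows {α : Type*} [Fintype α] [DecidableEq α] [CommRing K]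
    (R : Matrix α α K) (s : Finset α)
    (h : ∀ i, i ∉ s → ∀ j, R i j = if i = j then (1:K) else 0) :
    R.det = (subm R s s).det := by
  classical
  rw [← Matrix.det_submatrix_equiv_self (Equiv.sumCompl (· ∈ s)) R]
  have hb : R.submatrix (Equiv.sumCompl (· ∈ s)) (Equiv.sumCompl (· ∈ s)) =
      Matrix.fromBlocks (subm R s s)
        (Matrix.of fun (i : {x // x ∈ s}) (j : {x // ¬ x ∈ s}) => R i.1 j.1) 0 1 := by
    ext i j
    cases i with
    | inl i =>
      cases j with
      | inl j => rfl
      | inr j => rfl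
    | inr i =>
      cases j with
      | inl j =>
        have : i.1 ≠ j.1 := fun hij => i.2 (hij ▸ j.2)
        simp [Matrix.submatrix, h i.1 i.2 j.1, this]
      | inr j =>
        have : (i.1 = j.1) ↔ (i = j) := Subtype.ext_iff.symm
        simp [Matrix.submatrix, h i.1 i.2 j.1, Matrix.one_apply, this]
  rw [hb, Matrix.det_fromBlocks_zero₂₁, Matrix.det_one, mul_one]

lemma det_eq_det_subm_of_cols {α : Type*} [Fintype α] [DecidableEq α] [CommRing K]
    (R : Matrix α α K) (s : Finset α)
    (h : ∀ j, j ∉ s → ∀ i, R i j = if i = j then (1:K) else 0) :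
    R.det = (subm R s s).det := by
  classical
  rw [← Matrix.det_transpose R, det_eq_det_subm_of_rows Rᵀ s (fun i hi j => by
    rw [Matrix.transpose_apply, h i hi j]
    simp [eq_comm])]
  rw [← Matrix.det_transpose (subm R s s)]
  rfl

lemma pminor_univ {m : Type*} [Fintype m] [DecidableEq m] [CommRing K] (X : Matrix m m K) :
    pminor X Finset.univ = X.det := by
  have he : subm X Finset.univ Finset.univ =
      X.submatrix (Equiv.subtypeUnivEquiv fun x => Finset.mem_univ x)
        (Equiv.subtypeUnivEquiv fun x => Finset.mem_univ x) := by
    ext i j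
    rfl
  rw [pminor, he, Matrix.det_submatrix_equiv_self]

lemma pminor_empty {m : Type*} [DecidableEq m] [CommRing K] (X : Matrix m m K) :
    pminor X ∅ = 1 := by
  haveI : IsEmpty ((∅ : Finset m) : Type _) := ⟨fun x => (Finset.notMem_empty _ x.2)⟩
  exact Matrix.det_isEmpty

lemma jacobi {n : ℕ} [Field K] (M : Matrix (Fin n) (Fin n) K) (hM : IsUnit M.det)
    (S : Finset (Fin n)) : pminor M⁻¹ S * M.det = pminor M Sᶜ := by
  classical
  set N : Matrix (Fin n) (Fin n) K :=
    Matrix.of fun i j => if j ∈ S then M⁻¹ i j else if i = j then 1 else 0 with hN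
  have hNdet : N.det = pminor M⁻¹ S := by
    rw [det_eq_det_subm_of_cols N S (fun j hj i => by simp [hN, hj])]
    congr 1
    ext i j
    simp [subm, hN, j.2]
  have hMN : M * N = Matrix.of fun i j =>
      if j ∈ S then (if i = j then (1:K) else 0) else M i j := by
    ext i j
    rw [Matrix.mul_apply]
    by_cases hj : j ∈ S
    · have : ∑ k, M i k * N k j = (M * M⁻¹) i j := by
        rw [Matrix.mul_apply]
        exact Finset.sum_congr rfl fun k _ => by simp [hN, hj]
      rw [this, Matrix.mul_nonsing_inv M hM]
      simp [Matrix.one_apply, hj]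
    · simp [hN, hj, mul_ite]
  have hMNdet : (M * N).det = pminor M Sᶜ := by
    rw [hMN, det_eq_det_subm_of_cols _ Sᶜ (fun j hj i => by
      have : j ∈ S := by simpa using hj
      simp [this])]
    congr 1
    ext i j
    have : j.1 ∉ S := Finset.mem_compl.mp j.2
    simp [subm, this]
  rw [← hNdet, mul_comm, ← Matrix.det_mul, hMNdet]

lemma det_add_diagonal {α : Type*} [Fintype α] [DecidableEq α] [CommRing K]
    (P : Matrix α α K) (d : α → K) :
    (P + Matrix.diagonal d).det =
      ∑ s : Finset α, (∏ i ∈ sᶜ, d i) * (subm P s s).det := by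
  classical
  have h := (Matrix.detRowAlternating :
      (α → K) [⋀^α]→ₗ[K] K).toMultilinearMap.map_add_univ (fun i => P i)
      (fun i => Matrix.diagonal d i)
  have hP : (P + Matrix.diagonal d).det =
      ∑ s : Finset α, Matrix.det
        (s.piecewise (fun i => P i) (fun i => Matrix.diagonal d i) : Matrix α α K) := h
  rw [hP]
  refine Finset.sum_congr rfl fun s _ => ?_
  have hfac : (s.piecewise (fun i => P i) (fun i => Matrix.diagonal d i) : Matrix α α K) =
      Matrix.diagonal (fun i => if i ∈ s then 1 else d i) *
        Matrix.of (fun i j => if i ∈ s then P i j else if i = j then (1:K) else 0) := by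
    ext i j
    rw [Matrix.diagonal_mul]
    by_cases hi : i ∈ s
    · simp [Finset.piecewise, hi]
    · simp [Finset.piecewise, hi, Matrix.diagonal]
  rw [hfac, Matrix.det_mul, Matrix.det_diagonal]
  have hprod : (∏ i, (if i ∈ s then (1:K) else d i)) = ∏ i ∈ sᶜ, d i := by
    rw [← Finset.prod_mul_prod_compl s]
    rw [Finset.prod_congr rfl (fun i hi => if_pos hi),
      Finset.prod_congr rfl (fun i hi => if_neg (Finset.mem_compl.mp hi))]
    simp
  rw [hprod]
  congr 1
  rw [det_eq_det_subm_of_rows _ s (fun i hi j => by simp [hi])]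
  congr 1
  ext i j
  simp [subm, i.2]

lemma subm_subm_det {m : Type*} [DecidableEq m] [CommRing K] (X : Matrix m m K)
    (S : Finset m) (s : Finset ((S : Finset m) : Type _)) :
    (subm (subm X S S) s s).det = pminor X (s.map (Function.Embedding.subtype _)) := by
  classical
  set T := s.map (Function.Embedding.subtype _) with hT
  have key : ∀ j : m, j ∈ T ↔ ∃ h : j ∈ S, (⟨j, h⟩ : (S : Type _)) ∈ s := by
    intro j
    constructor
    · intro hj
      obtain ⟨a, ha, hae⟩ := Finset.mem_map.mp hj
      exact ⟨hae ▸ a.2, by cases a; cases hae; exact ha⟩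
    · rintro ⟨h, hs⟩
      exact Finset.mem_map.mpr ⟨⟨j, h⟩, hs, rfl⟩
  let e : (s : Type _) ≃ (T : Type _) :=
    { toFun := fun i => ⟨i.1.1, (key _).mpr ⟨i.1.2, i.2⟩⟩
      invFun := fun j => ⟨⟨j.1, ((key _).mp j.2).1⟩, ((key _).mp j.2).2⟩
      left_inv := fun i => by ext; rfl
      right_inv := fun j => by ext; rfl }
  rw [pminor, ← Matrix.det_submatrix_equiv_self e (subm X T T)]
  rfl

lemma pme_add_diag {n : ℕ} [CommRing K]
    {X Y D : Matrix (Fin n) (Fin n) K} (hD : D.IsDiag)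
    (h : ∀ S, pminor X S = pminor Y S) (S : Finset (Fin n)) :
    pminor (X + D) S = pminor (Y + D) S := by
  classical
  have hsub : ∀ Z : Matrix (Fin n) (Fin n) K,
      subm (Z + D) S S = subm Z S S + Matrix.diagonal (fun i : (S : Type _) => D i.1 i.1) := by
    intro Z
    ext i j
    by_cases hij : i = j
    · subst hij; simp [subm, Matrix.diagonal]
    · have hij' : i.1 ≠ j.1 := fun hh => hij (Subtype.ext hh)
      simp [subm, Matrix.diagonal, hij, hD hij']
  unfold pminor
  rw [hsub X, hsub Y, det_add_diagonal, det_add_diagonal]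
  refine Finset.sum_congr rfl fun s _ => ?_
  congr 1
  rw [show (subm X S S : Matrix _ _ K) = subm X S S from rfl]
  rw [subm_subm_det, subm_subm_det]
  exact h _

/-- If `A + D` is invertible (with `D` diagonal) and
`C ≡PME (A + D)⁻¹`, then `C` is invertible and `C⁻¹ − D ≡PME A`. -/
theorem pme_inv_sub_diag {n : ℕ} {K : Type*} [Field K]
    (A D C : Matrix (Fin n) (Fin n) K)
    (hD : D.IsDiag) (hAD : IsUnit (A + D).det)
    (hC : PME C (A + D)⁻¹) :
    IsUnit C.det ∧ PME (C⁻¹ - D) A := by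
  classical
  set M := A + D with hM
  have hMdet : M.det ≠ 0 := hAD.ne_zero
  have hC' : ∀ S, pminor C S = pminor M⁻¹ S := by
    intro S
    rcases S.eq_empty_or_nonempty with rfl | hS
    · rw [pminor_empty, pminor_empty]
    · exact hC S hS
  have hdetC : C.det = M.det⁻¹ := by
    rw [← pminor_univ, hC', pminor_univ, Matrix.det_nonsing_inv, Ring.inverse_eq_inv']
  have hCdet : IsUnit C.det := by
    rw [hdetC]
    exact isUnit_iff_ne_zero.mpr (inv_ne_zero hMdet)
  refine ⟨hCdet, ?_⟩
  have hinv : ∀ S, pminor C⁻¹ S = pminor M S := by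
    intro S
    have j1 := jacobi C hCdet S
    have j2 := jacobi M hAD Sᶜ
    rw [compl_compl] at j2
    calc pminor C⁻¹ S = pminor C⁻¹ S * C.det * M.det := by
          rw [hdetC, mul_assoc, inv_mul_cancel₀ hMdet, mul_one]
      _ = pminor M⁻¹ Sᶜ * M.det := by rw [j1, hC']
      _ = pminor M S := j2
  have hDneg : (-D).IsDiag := fun i j hij => by show -(D i j) = 0; rw [hD hij, neg_zero]
  intro S _
  have hfin := pme_add_diag hDneg hinv S
  have h1 : C⁻¹ - D = C⁻¹ + -D := sub_eq_add_neg _ _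
  have h2 : M + -D = A := by rw [hM]; abel
  rw [h1, ← h2]
  exact hfin

end PMAP
end

section
/- Let A ∈ 𝔽^{n×n} have all off-diagonal entries nonzero, and let i, j, k, ℓ₁, ℓ₂ ∈ [n] be five distinct indices. If {i,j} is a cut of A[{i,j,k,ℓ₁}] and {i,j} is a cut of A[{i,j,k,ℓ₂}], then {i,j} is a cut of A[{i,j,k,ℓ₁,ℓ₂}]. -/
namespace PMAP

open Matrix

variable {K : Type*}

theorem subm_eq_mul_left [Field K] {l m o : Type*} [Fintype m] [DecidableEq m]
    (M : Matrix m o K) (f : l → m) :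
    M.submatrix f id = (Matrix.of fun r x => if x = f r then (1:K) else 0) * M := by
  ext r c
  simp [Matrix.mul_apply]

theorem subm_eq_mul_right [Field K] {m o o' : Type*} [Fintype o] [DecidableEq o]
    (M : Matrix m o K) (g : o' → o) :
    M.submatrix id g = M * (Matrix.of fun x c => if x = g c then (1:K) else 0) := by
  ext r c
  simp [Matrix.mul_apply]

theorem rank_submatrix_le' [Field K] {l m o o' : Type*} [Fintype m] [DecidableEq m] [Fintype o]
    [DecidableEq o] [Fintype l] [Fintype o']
    (M : Matrix m o K) (f : l → m) (g : o' → o) :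
    (M.submatrix f g).rank ≤ M.rank := by
  have h1 : M.submatrix f g = (M.submatrix f id).submatrix id g := rfl
  rw [h1, subm_eq_mul_right, subm_eq_mul_left]
  exact le_trans (Matrix.rank_mul_le_left _ _) (Matrix.rank_mul_le_right _ _)

theorem det2_of_rank_le_one [Field K] {m o : Type*} [Fintype m] [DecidableEq m] [Fintype o] [DecidableEq o]
    (M : Matrix m o K) (h : M.rank ≤ 1) (a b : m) (c d : o) :
    M a c * M b d = M a d * M b c := by
  set N : Matrix (Fin 2) (Fin 2) K := M.submatrix ![a, b] ![c, d] with hN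
  have hr : N.rank ≤ 1 := le_trans (rank_submatrix_le' M _ _) h
  have hdet : N.det = 0 := by
    by_contra hd
    have : IsUnit N := (Matrix.isUnit_iff_isUnit_det N).mpr (isUnit_iff_ne_zero.mpr hd)
    have := Matrix.rank_of_isUnit N this
    simp [this] at hr
  have := Matrix.det_fin_two N
  rw [hdet] at this
  have h00 : N 0 0 = M a c := rfl
  have h01 : N 0 1 = M a d := rfl
  have h10 : N 1 0 = M b c := rfl
  have h11 : N 1 1 = M b d := rfl
  rw [h00, h01, h10, h11] at this
  linear_combination -this

theorem rank_le_one_of_outer [Field K] {m o : Type*} [Fintype m] [Fintype o]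
    (M : Matrix m o K) (u : m → K) (v : o → K) (h : ∀ a b, M a b = u a * v b) :
    M.rank ≤ 1 := by
  have hM : M = (Matrix.of fun a (_ : Unit) => u a) * (Matrix.of fun (_ : Unit) b => v b) := by
    ext a b
    simp [Matrix.mul_apply, h]
  rw [hM]
  calc ((Matrix.of fun a (_ : Unit) => u a) * (Matrix.of fun (_ : Unit) b => v b)).rank
      ≤ (Matrix.of fun a (_ : Unit) => u a).rank := Matrix.rank_mul_le_left _ _
    _ ≤ Fintype.card Unit := Matrix.rank_le_card_width _
    _ = 1 := by simp

/-- If `{i,j}` is a cut of both `A[{i,j,k,ℓ₁}]` and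
`A[{i,j,k,ℓ₂}]`, then `{i,j}` is a cut of `A[{i,j,k,ℓ₁,ℓ₂}]`. -/
theorem cut_trans {n : ℕ} {K : Type*} [Field K]
    (A : Matrix (Fin n) (Fin n) K)
    (hA : ∀ i j : Fin n, i ≠ j → A i j ≠ 0)
    (i j k l₁ l₂ : Fin n)
    (hij : i ≠ j) (hik : i ≠ k) (hil₁ : i ≠ l₁) (hil₂ : i ≠ l₂)
    (hjk : j ≠ k) (hjl₁ : j ≠ l₁) (hjl₂ : j ≠ l₂)
    (hkl₁ : k ≠ l₁) (hkl₂ : k ≠ l₂) (hl₁l₂ : l₁ ≠ l₂)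
    (h₁ : IsCutOn A {i, j, k, l₁} {i, j})
    (h₂ : IsCutOn A {i, j, k, l₂} {i, j}) :
    IsCutOn A {i, j, k, l₁, l₂} {i, j} := by
  obtain ⟨hsub₁, hX2, hI1, hr₁, hr₁'⟩ := h₁
  obtain ⟨-, -, -, hr₂, hr₂'⟩ := h₂
  have hiX : i ∈ ({i, j} : Finset (Fin n)) := by simp
  have hjX : j ∈ ({i, j} : Finset (Fin n)) := by simp
  have hk₁ : k ∈ ({i, j, k, l₁} : Finset (Fin n)) \ {i, j} := by simp [hik.symm, hjk.symm]
  have hl₁₁ : l₁ ∈ ({i, j, k, l₁} : Finset (Fin n)) \ {i, j} := by simp [hil₁.symm, hjl₁.symm]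
  have hk₂ : k ∈ ({i, j, k, l₂} : Finset (Fin n)) \ {i, j} := by simp [hik.symm, hjk.symm]
  have hl₂₂ : l₂ ∈ ({i, j, k, l₂} : Finset (Fin n)) \ {i, j} := by simp [hil₂.symm, hjl₂.symm]
  have E₁ : A i k * A j l₁ = A i l₁ * A j k :=
    det2_of_rank_le_one _ hr₁ ⟨i, hiX⟩ ⟨j, hjX⟩ ⟨k, hk₁⟩ ⟨l₁, hl₁₁⟩
  have E₂ : A i k * A j l₂ = A i l₂ * A j k :=
    det2_of_rank_le_one _ hr₂ ⟨i, hiX⟩ ⟨j, hjX⟩ ⟨k, hk₂⟩ ⟨l₂, hl₂₂⟩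
  have F₁ : A k i * A l₁ j = A k j * A l₁ i :=
    det2_of_rank_le_one _ hr₁' ⟨k, hk₁⟩ ⟨l₁, hl₁₁⟩ ⟨i, hiX⟩ ⟨j, hjX⟩
  have F₂ : A k i * A l₂ j = A k j * A l₂ i :=
    det2_of_rank_le_one _ hr₂' ⟨k, hk₂⟩ ⟨l₂, hl₂₂⟩ ⟨i, hiX⟩ ⟨j, hjX⟩
  have hjk0 : A j k ≠ 0 := hA j k hjk
  have hki0 : A k i ≠ 0 := hA k i hik.symm
  refine ⟨?_, ?_, ?_, ?_, ?_⟩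
  · intro x hx
    simp only [Finset.mem_insert, Finset.mem_singleton] at hx ⊢
    tauto
  · rw [Finset.card_insert_of_notMem (by simp [hij]), Finset.card_singleton]
  · rw [Finset.card_insert_of_notMem (by simp [hij]), Finset.card_singleton,
      Finset.card_insert_of_notMem (by simp [hij, hik, hil₁, hil₂]),
      Finset.card_insert_of_notMem (by simp [hjk, hjl₁, hjl₂]),
      Finset.card_insert_of_notMem (by simp [hkl₁, hkl₂]),
      Finset.card_insert_of_notMem (by simp [hl₁l₂]),
      Finset.card_singleton]
    omega
  · refine rank_le_one_of_outer _ (fun a => A a.1 k * (A j k)⁻¹) (fun c => A j c.1) ?_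
    rintro ⟨a, ha⟩ ⟨c, hc⟩
    show A a c = A a k * (A j k)⁻¹ * A j c
    simp only [Finset.mem_insert, Finset.mem_singleton] at ha
    simp only [Finset.mem_sdiff, Finset.mem_insert, Finset.mem_singleton, not_or] at hc
    obtain ⟨hc1, hc2, hc3⟩ := hc
    rcases hc1 with hc | hc | hc | hc | hc
    · exact absurd hc hc2
    · exact absurd hc hc3
    · rcases ha with ha | ha <;> rw [ha, hc] <;> field_simp
    · rcases ha with ha | ha <;> rw [ha, hc] <;> field_simp
      linear_combination -E₁
    · rcases ha with ha | ha <;> rw [ha, hc] <;> field_simp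
      linear_combination -E₂
  · refine rank_le_one_of_outer _ (fun c => A c.1 i * (A k i)⁻¹) (fun a => A k a.1) ?_
    rintro ⟨c, hc⟩ ⟨a, ha⟩
    show A c a = A c i * (A k i)⁻¹ * A k a
    simp only [Finset.mem_insert, Finset.mem_singleton] at ha
    simp only [Finset.mem_sdiff, Finset.mem_insert, Finset.mem_singleton, not_or] at hc
    obtain ⟨hc1, hc2, hc3⟩ := hc
    rcases hc1 with hc | hc | hc | hc | hc
    · exact absurd hc hc2
    · exact absurd hc hc3
    · rcases ha with ha | ha <;> rw [ha, hc] <;> field_simp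
    · rcases ha with ha | ha <;> rw [ha, hc] <;> field_simp
      linear_combination F₁
    · rcases ha with ha | ha <;> rw [ha, hc] <;> field_simp
      linear_combination F₂

end PMAP
end

section
/- Let A ∈ 𝔽^{n×n} have all off-diagonal entries nonzero, let S ⊆ [n] be a cut of A, and let s ∈ S and t ∈ S̄. Let M be a matrix indexed by S ∪ {t} with M ≡PME A[S ∪ {t}], and let N be a matrix indexed by {s} ∪ S̄ with N ≡PME A[{s} ∪ S̄]. Then N[s,t], N[t,s], M[s,t], M[t,s] are all nonzero, and the matrix A' ∈ 𝔽^{n×n} defined by A'[i,j] = M[i,j] for i, j ∈ S; A'[i,j] = M[i,t]·N[s,j] / N[s,t] for i ∈ S and j ∈ S̄; A'[i,j] = N[i,s]·M[t,j] / N[t,s] for i ∈ S̄ and j ∈ S; and A'[i,j] = N[i,j] for i, j ∈ S̄, satisfies A' ≡PME A. -/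
namespace Matrix

section Determinant

variable {n m₁ m₂ R : Type*} [Fintype n] [DecidableEq n] [CommRing R]

theorem dotProduct_adjugate_mulVec (A : Matrix n n R) (u v : n → R) :
    v ⬝ᵥ A.adjugate *ᵥ u = ∑ i, u i * (A.updateRow i v).det := by
  rw [dotProduct_mulVec, ← mulVec_transpose, adjugate_transpose, ← cramer_eq_adjugate_mulVec,
    dotProduct_comm]
  simp only [dotProduct, cramer_transpose_apply]

theorem det_add_vecMulVec_eq_sum (A : Matrix n n R) (u v : n → R) :
    (A + vecMulVec u v).det = A.det + ∑ i, u i * (A.updateRow i v).det := by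
  suffices key : ∀ F : Finset n, (A + vecMulVec (fun i => if i ∈ F then u i else 0) v).det
      = A.det + ∑ i ∈ F, u i * (A.updateRow i v).det by
    simpa using key Finset.univ
  intro F
  induction F using Finset.induction_on with
  | empty => simp [← Pi.zero_def]
  | insert k F hk ih =>
    set B := A + vecMulVec (fun i => if i ∈ F then u i else 0) v
    have hBk : B k = A k := by ext j; simp [B, vecMulVec_apply, hk]
    have hstep : A + vecMulVec (fun i => if i ∈ insert k F then u i else 0) v
        = B.updateRow k (A k + u k • v) := by
      ext i j
      by_cases hik : i = k
      · subst hik; simp [B, vecMulVec_apply]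
      · simp [B, vecMulVec_apply, hik]
    have hrow : (B.updateRow k v).det = (A.updateRow k v).det := by
      refine det_eq_of_forall_row_eq_smul_add_const (fun i => if i ∈ F then u i else 0) k
        (by simp [hk]) fun i j => ?_
      by_cases hik : i = k
      · subst hik; simp [hk]
      · simp [B, vecMulVec_apply, hik]
    rw [hstep, det_updateRow_add, ← hBk, updateRow_eq_self, det_updateRow_smul, hrow, ih,
      Finset.sum_insert hk]
    ring

theorem det_updateRow_updateRow_swap (M : Matrix n n R) {a b : n} (hab : a ≠ b) (u v : n → R) :
    ((M.updateRow a u).updateRow b v).det = -((M.updateRow a v).updateRow b u).det := by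
  have h := det_permute (Equiv.swap a b) ((M.updateRow a u).updateRow b v)
  have hsub : ((M.updateRow a u).updateRow b v).submatrix (Equiv.swap a b) id
      = (M.updateRow a v).updateRow b u := by
    ext r c
    simp only [submatrix_apply, updateRow_apply, Equiv.swap_apply_def, id]
    split_ifs <;> simp_all
  rw [hsub, Equiv.Perm.sign_swap hab] at h
  simp [h]

variable [DecidableEq m₁] [DecidableEq m₂]

theorem fromBlocks_updateRow_inl {α : Type*} (A : Matrix m₁ m₁ α) (B : Matrix m₁ m₂ α)
    (C : Matrix m₂ m₁ α) (D : Matrix m₂ m₂ α) (i : m₁) (u : m₁ → α) (v : m₂ → α) :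
    (fromBlocks A B C D).updateRow (.inl i) (Sum.elim u v)
      = fromBlocks (A.updateRow i u) (B.updateRow i v) C D := by
  ext (a | a) (b | b) <;> simp [updateRow_apply]

theorem fromBlocks_updateRow_inr {α : Type*} (A : Matrix m₁ m₁ α) (B : Matrix m₁ m₂ α)
    (C : Matrix m₂ m₁ α) (D : Matrix m₂ m₂ α) (k : m₂) (u : m₁ → α) (v : m₂ → α) :
    (fromBlocks A B C D).updateRow (.inr k) (Sum.elim u v)
      = fromBlocks A B (C.updateRow k u) (D.updateRow k v) := by
  ext (a | a) (b | b) <;> simp [updateRow_apply]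

theorem det_fromBlocks_vecMulVec [Fintype m₁] [Fintype m₂] (B₁ : Matrix m₁ m₁ R)
    (B₂ : Matrix m₂ m₂ R) (x w : m₁ → R) (y z : m₂ → R) :
    (fromBlocks B₁ (vecMulVec x y) (vecMulVec z w) B₂).det
      = B₁.det * B₂.det - (w ⬝ᵥ B₁.adjugate *ᵥ x) * (y ⬝ᵥ B₂.adjugate *ᵥ z) := by
  -- Expanding along the rank-one part of the top rows and then of the bottom rows, only terms
  -- with exactly one row of each kind survive; swapping those two rows makes them block diagonal.
  set D : Matrix (m₁ ⊕ m₂) (m₁ ⊕ m₂) R := fromBlocks B₁ 0 0 B₂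
  set Y : m₁ ⊕ m₂ → R := Sum.elim 0 y
  set W : m₁ ⊕ m₂ → R := Sum.elim w 0
  have hsplit : fromBlocks B₁ (vecMulVec x y) (vecMulVec z w) B₂
      = fromBlocks B₁ 0 (vecMulVec z w) B₂ + vecMulVec (Sum.elim x 0) Y := by
    ext (a | a) (b | b) <;> simp [Y, vecMulVec_apply]
  have hrow : ∀ i, (fromBlocks B₁ 0 (vecMulVec z w) B₂).updateRow (.inl i) Y
      = D.updateRow (.inl i) Y + vecMulVec (Sum.elim 0 z) W := by
    intro i
    ext (a | a) (b | b) <;> simp [D, Y, W, updateRow_apply, vecMulVec_apply]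
  have hcorner : ∀ i, (D.updateRow (.inl i) Y).det = 0 := fun i => by
    rw [fromBlocks_updateRow_inl, det_fromBlocks_zero₂₁,
      det_eq_zero_of_row_eq_zero i fun _ => by simp, zero_mul]
  have hswap : ∀ i k, ((D.updateRow (.inl i) Y).updateRow (.inr k) W).det
      = -((B₁.updateRow i w).det * (B₂.updateRow k y).det) := fun i k => by
    rw [det_updateRow_updateRow_swap _ Sum.inl_ne_inr, fromBlocks_updateRow_inl,
      fromBlocks_updateRow_inr, updateRow_zero_zero, updateRow_zero_zero, det_fromBlocks_zero₂₁]
  rw [hsplit, det_add_vecMulVec_eq_sum, det_fromBlocks_zero₁₂, Fintype.sum_sum_type]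
  simp only [hrow, det_add_vecMulVec_eq_sum, hcorner, Fintype.sum_sum_type, hswap,
    dotProduct_adjugate_mulVec, Sum.elim_inl, Sum.elim_inr, Pi.zero_apply, zero_mul,
    Finset.sum_const_zero, add_zero, zero_add, Finset.mul_sum, Finset.sum_mul]
  rw [Finset.sum_comm, sub_eq_add_neg, ← Finset.sum_neg_distrib]
  congr 1
  refine Finset.sum_congr rfl fun _ _ => ?_
  rw [← Finset.sum_neg_distrib]
  exact Finset.sum_congr rfl fun _ _ => by ring

end Determinant

theorem mul_mul_eq_of_rank_le_one {m n K : Type*} [Fintype n] [Field K] {B : Matrix m n K}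
    (hB : B.rank ≤ 1) (i₁ i₂ : m) (j₁ j₂ : n) :
    B i₁ j₁ * B i₂ j₂ = B i₁ j₂ * B i₂ j₁ := by
  by_contra hne
  set P := B.submatrix ![i₁, i₂] ![j₁, j₂]
  have hP : IsUnit P := by
    rw [isUnit_iff_isUnit_det, isUnit_iff_ne_zero, det_fin_two, sub_ne_zero]
    exact hne
  have h2 := (rank_of_isUnit P hP).symm.trans_le ((rank_submatrix_le B _ _).trans hB)
  rw [Fintype.card_fin] at h2
  omega

theorem eq_mul_div_of_rank_le_one {m n K : Type*} [Fintype n] [Field K] {B : Matrix m n K}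
    (hB : B.rank ≤ 1) {i₀ : m} {j₀ : n} (h₀ : B i₀ j₀ ≠ 0) (i : m) (j : n) :
    B i j = B i j₀ * B i₀ j / B i₀ j₀ := by
  rw [eq_div_iff h₀, mul_mul_eq_of_rank_le_one hB]

end Matrix

namespace PMAP

open Matrix

variable {K : Type*}

section

variable {ι : Type*} [DecidableEq ι]

theorem pminor_empty_s18 [CommRing K] (C : Matrix ι ι K) : pminor C ∅ = 1 :=
  det_isEmpty

theorem pminor_singleton_s18 [CommRing K] (C : Matrix ι ι K) (t : ι) : pminor C {t} = C t t :=
  det_unique _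

theorem pminor_union_s18 [CommRing K] (C : Matrix ι ι K) {T₁ T₂ : Finset ι} (h : Disjoint T₁ T₂) :
    pminor C (T₁ ∪ T₂)
      = (fromBlocks (subm C T₁ T₁) (subm C T₁ T₂) (subm C T₂ T₁) (subm C T₂ T₂)).det := by
  rw [pminor, ← det_submatrix_equiv_self (Equiv.Finset.union T₁ T₂ h)]
  congr 1
  ext (i | i) (j | j) <;> rfl

theorem pminor_union_singleton [CommRing K] (C : Matrix ι ι K) {T : Finset ι} {t : ι}
    (ht : t ∉ T) :
    pminor C (T ∪ {t})
      = C t t * pminor C T - (fun i : T => C t i) ⬝ᵥ (subm C T T).adjugate *ᵥ fun i => C i t := by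
  have hcol : subm C T {t} = vecMulVec (fun i : T => C i t) 1 := by
    ext i ⟨j, hj⟩
    rw [Finset.mem_singleton] at hj
    simp [subm, vecMulVec_apply, hj]
  have hrow : subm C {t} T = vecMulVec 1 (fun i : T => C t i) := by
    ext ⟨j, hj⟩ i
    rw [Finset.mem_singleton] at hj
    simp [subm, vecMulVec_apply, hj]
  have hdet : (subm C {t} {t}).det = C t t := pminor_singleton_s18 C t
  rw [pminor_union_s18 C (Finset.disjoint_singleton_right.2 ht), hcol, hrow, det_fromBlocks_vecMulVec,
    adjugate_subsingleton (subm C {t} {t}), hdet, ← pminor]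
  simp only [one_mulVec, dotProduct, Finset.univ_unique, Pi.one_apply, Finset.sum_singleton]
  ring

theorem pminor_pair_s18 [CommRing K] (C : Matrix ι ι K) {s t : ι} (hst : s ≠ t) :
    pminor C {s, t} = C s s * C t t - C s t * C t s := by
  rw [Finset.insert_eq, pminor_union_singleton C (Finset.notMem_singleton.2 hst.symm),
    adjugate_subsingleton, pminor_singleton_s18]
  simp only [one_mulVec, dotProduct, Finset.univ_unique, Finset.sum_singleton,
    Finset.default_singleton]
  ring

theorem pminor_union_eq_of_cross_factor [Field K] (C P Q : Matrix ι ι K) {T₁ T₂ : Finset ι}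
    (hdisj : Disjoint T₁ T₂) {s t : ι} (ht : t ∉ T₁) (hs : s ∉ T₂)
    (h₁ : ∀ i ∈ T₁, ∀ j ∈ T₁, C i j = P i j) (h₂ : ∀ i ∈ T₂, ∀ j ∈ T₂, C i j = Q i j)
    (h₁₂ : ∀ i ∈ T₁, ∀ j ∈ T₂, C i j = P i t * Q s j / Q s t)
    (h₂₁ : ∀ i ∈ T₂, ∀ j ∈ T₁, C i j = Q i s * P t j / Q t s) :
    pminor C (T₁ ∪ T₂) = pminor P T₁ * pminor Q T₂
      - (P t t * pminor P T₁ - pminor P (T₁ ∪ {t}))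
        * (Q s s * pminor Q T₂ - pminor Q (T₂ ∪ {s})) / (Q s t * Q t s) := by
  have hB₁ : subm C T₁ T₁ = subm P T₁ T₁ := by ext i j; exact h₁ _ i.2 _ j.2
  have hB₂ : subm C T₂ T₂ = subm Q T₂ T₂ := by ext i j; exact h₂ _ i.2 _ j.2
  have hB₁₂ : subm C T₁ T₂
      = vecMulVec (fun i : T₁ => P i t) ((Q s t)⁻¹ • fun j : T₂ => Q s j) := by
    ext i j
    simp only [subm, of_apply, vecMulVec_apply, Pi.smul_apply, smul_eq_mul, h₁₂ _ i.2 _ j.2]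
    ring
  have hB₂₁ : subm C T₂ T₁
      = vecMulVec (fun j : T₂ => Q j s) ((Q t s)⁻¹ • fun i : T₁ => P t i) := by
    ext i j
    simp only [subm, of_apply, vecMulVec_apply, Pi.smul_apply, smul_eq_mul, h₂₁ _ i.2 _ j.2]
    ring
  rw [pminor_union_s18 C hdisj, hB₁, hB₂, hB₁₂, hB₂₁, det_fromBlocks_vecMulVec, smul_dotProduct,
    smul_dotProduct, pminor_union_singleton P ht, pminor_union_singleton Q hs, ← pminor, ← pminor,
    div_eq_mul_inv, mul_inv]
  ring

theorem mul_eq_mul_of_pminor_eq [CommRing K] {P C : Matrix ι ι K} {s t : ι} (hst : s ≠ t)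
    (h : ∀ T ⊆ {s, t}, pminor P T = pminor C T) : P s t * P t s = C s t * C t s := by
  have hs := h {s} (by simp)
  have ht := h {t} (by simp)
  have hpair := h {s, t} subset_rfl
  rw [pminor_singleton_s18, pminor_singleton_s18] at hs ht
  rw [pminor_pair_s18 P hst, pminor_pair_s18 C hst] at hpair
  linear_combination P t t * hs + C s s * ht - hpair

theorem forall_pminor_eq_of_nonempty [CommRing K] {P C : Matrix ι ι K} {U : Finset ι}
    (h : ∀ T : Finset ι, T.Nonempty → T ⊆ U → pminor P T = pminor C T) :
    ∀ T ⊆ U, pminor P T = pminor C T := by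
  intro T hT
  rcases T.eq_empty_or_nonempty with rfl | hne
  · rw [pminor_empty_s18, pminor_empty_s18]
  · exact h T hne hT

theorem IsCut.pminor_union_eq [Fintype ι] [Field K] {A : Matrix ι ι K} {S : Finset ι}
    (hS : IsCut A S) {s t : ι} (hs : s ∈ S) (ht : t ∉ S) (hst : A s t ≠ 0) (hts : A t s ≠ 0)
    {T₁ T₂ : Finset ι} (h₁ : T₁ ⊆ S) (h₂ : T₂ ⊆ Sᶜ) :
    pminor A (T₁ ∪ T₂) = pminor A T₁ * pminor A T₂
      - (A t t * pminor A T₁ - pminor A (T₁ ∪ {t}))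
        * (A s s * pminor A T₂ - pminor A (T₂ ∪ {s})) / (A s t * A t s) := by
  obtain ⟨-, -, -, hSSc, hScS⟩ := hS
  have hSc : ∀ {j}, j ∈ T₂ → j ∈ Finset.univ \ S := fun hj => by simpa using h₂ hj
  exact pminor_union_eq_of_cross_factor A A A (disjoint_compl_right.mono h₁ h₂)
    (fun h => ht (h₁ h)) (fun h => by simpa [hs] using h₂ h)
    (fun _ _ _ _ => rfl) (fun _ _ _ _ => rfl)
    (fun i hi j hj => eq_mul_div_of_rank_le_one hSSc (i₀ := ⟨s, hs⟩) (j₀ := ⟨t, by simpa⟩)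
      hst ⟨i, h₁ hi⟩ ⟨j, hSc hj⟩)
    (fun i hi j hj => eq_mul_div_of_rank_le_one hScS (i₀ := ⟨t, by simpa⟩) (j₀ := ⟨s, hs⟩)
      hts ⟨i, hSc hi⟩ ⟨j, h₁ hj⟩)

end

/-- Gluing principal minor equivalent pieces along a cut. -/
theorem pme_glue_along_cut {n : ℕ} {K : Type*} [Field K]
    (A M N : Matrix (Fin n) (Fin n) K)
    (hA : ∀ i j : Fin n, i ≠ j → A i j ≠ 0)
    (S : Finset (Fin n)) (hS : IsCut A S)
    (s t : Fin n) (hs : s ∈ S) (ht : t ∉ S)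
    (hM : ∀ T : Finset (Fin n), T.Nonempty → T ⊆ insert t S → pminor M T = pminor A T)
    (hN : ∀ T : Finset (Fin n), T.Nonempty → T ⊆ insert s Sᶜ → pminor N T = pminor A T) :
    N s t ≠ 0 ∧ N t s ≠ 0 ∧ M s t ≠ 0 ∧ M t s ≠ 0 ∧
      PME (Matrix.of fun i j =>
        if i ∈ S then
          (if j ∈ S then M i j else M i t * N s j / N s t)
        else
          (if j ∈ S then N i s * M t j / N t s else N i j)) A := by
  have hst : s ≠ t := fun h => ht (h ▸ hs)
  replace hM := forall_pminor_eq_of_nonempty hM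
  replace hN := forall_pminor_eq_of_nonempty hN
  have hMpair := mul_eq_mul_of_pminor_eq hst fun T hT =>
    hM T (hT.trans (by simp [Finset.insert_subset_iff, hs]))
  have hNpair := mul_eq_mul_of_pminor_eq hst fun T hT =>
    hN T (hT.trans (by simp [Finset.insert_subset_iff, ht]))
  have hAst : A s t * A t s ≠ 0 := mul_ne_zero (hA s t hst) (hA t s hst.symm)
  refine ⟨left_ne_zero_of_mul (hNpair ▸ hAst), right_ne_zero_of_mul (hNpair ▸ hAst),
    left_ne_zero_of_mul (hMpair ▸ hAst), right_ne_zero_of_mul (hMpair ▸ hAst), fun T _ => ?_⟩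
  have hMtt : M t t = A t t := by simpa [pminor_singleton_s18] using hM {t} (by simp)
  have hNss : N s s = A s s := by simpa [pminor_singleton_s18] using hN {s} (by simp)
  have hsplit : T ∩ S ∪ T \ S = T := (Finset.union_comm _ _).trans (Finset.sdiff_union_inter T S)
  rw [← hsplit, pminor_union_eq_of_cross_factor _ M N (Finset.disjoint_sdiff_inter T S).symm
      (s := s) (t := t) (by grind) (by grind) (by intro i hi j hj; simp_all)
      (by intro i hi j hj; simp_all) (by intro i hi j hj; simp_all) (by intro i hi j hj; simp_all),
    hS.pminor_union_eq hs ht (hA s t hst) (hA t s hst.symm) Finset.inter_subset_right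
      (fun x hx => by simp_all),
    hM _ (by intro x; simp; tauto), hM _ (by intro x; simp; tauto), hN _ (by intro x; simp; tauto),
    hN _ (by intro x; simp; tauto), hMtt, hNss, hNpair]

end PMAP
end
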